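/- arXiv:1805.00885 — 8 statements merged into one kernel-verified Lean document; each statement's English description precedes it below -/
import Mathlib

section
/- Let α be a partial action of a groupoid G on a ring A. Then α is global (i.e., α_g ∘ α_h = α_{gh} for all composable g, h) if and only if A_g = A_{t(g)} for all morphisms g. -/
open CategoryTheory

universe u v w

/-- `S` is a (two-sided) ideal of the subset `R` of the ring `A`. -/
def IsIdealIn {A : Type v} [Ring A] (S R : Set A) : Prop :=
  S ⊆ R ∧ (0 : A) ∈ S ∧ (∀ a ∈ S, ∀ b ∈ S, a + b ∈ S) ∧ (∀ a ∈ S, -a ∈ S) ∧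
    ∀ r ∈ R, ∀ s ∈ S, r * s ∈ S ∧ s * r ∈ S

/-- A partial action of a groupoid `G` on a ring `A`: for each morphism `g : a ⟶ b`,
an ideal `D g` of `D (𝟙 b)` (which is an ideal of `A`), and a ring isomorphism
`f g : D (inv g) → D g` (encoded as a total function of `A` which is a bijection of
the relevant subsets), such that `f (𝟙 y)` is the identity of `D (𝟙 y)` and
`f (h ≫ g)` extends `f g ∘ f h`. -/
structure PartialGroupoidAction (G : Type u) (A : Type v) [Groupoid G] [Ring A] where
  D : ∀ {a b : G}, (a ⟶ b) → Set A
  f : ∀ {a b : G}, (a ⟶ b) → A → A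
  ideal_obj : ∀ y : G, IsIdealIn (D (𝟙 y)) Set.univ
  ideal_mor : ∀ {a b : G} (g : a ⟶ b), IsIdealIn (D g) (D (𝟙 b))
  bij : ∀ {a b : G} (g : a ⟶ b), Set.BijOn (f g) (D (Groupoid.inv g)) (D g)
  map_add : ∀ {a b : G} (g : a ⟶ b), ∀ u ∈ D (Groupoid.inv g), ∀ v ∈ D (Groupoid.inv g),
    f g (u + v) = f g u + f g v
  map_mul : ∀ {a b : G} (g : a ⟶ b), ∀ u ∈ D (Groupoid.inv g), ∀ v ∈ D (Groupoid.inv g),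
    f g (u * v) = f g u * f g v
  id_act : ∀ y : G, ∀ u ∈ D (𝟙 y), f (𝟙 y) u = u
  comp : ∀ {a b c : G} (h : a ⟶ b) (g : b ⟶ c), ∀ u ∈ D (Groupoid.inv h),
    f h u ∈ D (Groupoid.inv g) →
      u ∈ D (Groupoid.inv (h ≫ g)) ∧ f (h ≫ g) u = f g (f h u)

/-- A partial groupoid action is global (i.e. `α_g ∘ α_h = α_{gh}` as partial maps for
all composable `g, h`, which given the extension axiom amounts to the equality of
their domains) if and only if `A_g = A_{t g}` for every morphism `g`. -/
theorem stmt8 {G : Type u} {A : Type v} [Groupoid G] [Ring A]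
    (α : PartialGroupoidAction G A) :
    (∀ (a b c : G) (h : a ⟶ b) (g : b ⟶ c), ∀ u ∈ α.D (Groupoid.inv (h ≫ g)),
        u ∈ α.D (Groupoid.inv h) ∧ α.f h u ∈ α.D (Groupoid.inv g)) ↔
      (∀ (a b : G) (g : a ⟶ b), α.D g = α.D (𝟙 b)) := by
  constructor
  · intro H a b g
    refine Set.Subset.antisymm (α.ideal_mor g).1 ?_
    intro u hu
    have h1 : Groupoid.inv g ≫ g = 𝟙 b := Groupoid.inv_comp g
    have hu' : u ∈ α.D (Groupoid.inv (Groupoid.inv g ≫ g)) := by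
      rw [h1]
      have : Groupoid.inv (𝟙 b) = 𝟙 b := by simp
      rwa [this]
    have := (H b a b (Groupoid.inv g) g u hu').1
    rwa [show Groupoid.inv (Groupoid.inv g) = g by simp] at this
  · intro H a b c h g u hu
    have hinv : α.D (Groupoid.inv (h ≫ g)) = α.D (𝟙 a) := H c a (Groupoid.inv (h ≫ g))
    have hinvh : α.D (Groupoid.inv h) = α.D (𝟙 a) := H b a (Groupoid.inv h)
    have hu1 : u ∈ α.D (Groupoid.inv h) := by rw [hinvh, ← hinv]; exact hu
    refine ⟨hu1, ?_⟩
    have : α.f h u ∈ α.D h := (α.bij h).mapsTo hu1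
    rw [H a b h] at this
    rwa [H c b (Groupoid.inv g)]
end

section
/- Let G be a connected groupoid with fixed object x and transversal τ(x), and let (I, γ_{τ(x)}, γ_{(x)}) be a datum consisting of ideals I_y of a ring A, ring isomorphisms γ_{τ_y} : I_{τ_y⁻¹} → I_{τ_y} (with I_{τ_y} an ideal of I_y and I_{τ_y⁻¹} an ideal of I_x, and γ_{τ_x} = id_{I_x}), and a partial action γ_{(x)} = (I_h, γ_h)_{h ∈ G(x)} of G(x) on I_x, such that for each morphism g the set γ_{τ_{t(g)}}(I_{τ_{t(g)}⁻¹} ∩ γ_{g_x}(I_{τ_{s(g)}⁻¹} ∩ I_{g_x⁻¹})) is an ideal of I_{t(g)}, where g_x = τ_{t(g)}⁻¹ g τ_{s(g)}. Define β_g to be the identity of I_y when g = y is an object, and β_g = γ_{τ_{t(g)}} ∘ γ_{g_x} ∘ γ_{τ_{s(g)}}⁻¹ (as a composition of partial bijections) otherwise, with B_g the range of β_g. Then β = (B_g, β_g)_{g ∈ G} is a partial action of G on A. -/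
open CategoryTheory

universe u v w

/-- A partial action of the isotropy group `G(x)` (morphisms `x ⟶ x`) on the
"ring" `R` (a subset of the ambient ring `A`, playing the role of the ring acted on). -/
def IsPartialGroupActionOn {G : Type u} {A : Type v} [Groupoid G] [Ring A] (x : G)
    (R : Set A) (D : (x ⟶ x) → Set A) (f : (x ⟶ x) → A → A) : Prop :=
  D (𝟙 x) = R ∧ (∀ h : x ⟶ x, IsIdealIn (D h) R) ∧
  (∀ h : x ⟶ x, Set.BijOn (f h) (D (Groupoid.inv h)) (D h)) ∧
  (∀ h : x ⟶ x, ∀ u ∈ D (Groupoid.inv h), ∀ v ∈ D (Groupoid.inv h),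
      f h (u + v) = f h u + f h v ∧ f h (u * v) = f h u * f h v) ∧
  (∀ u ∈ R, f (𝟙 x) u = u) ∧
  (∀ h g : x ⟶ x, ∀ u ∈ D (Groupoid.inv h), f h u ∈ D (Groupoid.inv g) →
      u ∈ D (Groupoid.inv (h ≫ g)) ∧ f (h ≫ g) u = f g (f h u))

/-- `g` is an identity morphism (i.e. `g` "is an object" of the groupoid). -/
def IsIdMor {G : Type u} [Groupoid G] {a b : G} (g : a ⟶ b) : Prop :=
  ∃ h : b = a, g ≫ eqToHom h = 𝟙 a

/-- A datum `(I, γ_{τ(x)}, γ_{(x)})` for a connected groupoid `G` with fixed object `x`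
and transversal `τ`: ideals `I y` of `A`, ring isomorphisms `gτ y : Iτi y → Iτ y`
(with partial inverses `gτi y`), where `Iτ y` is an ideal of `I y` and `Iτi y` an ideal
of `I x`, `gτ x` the identity of `I x`, a partial action `(Ih, gh)` of the isotropy
group `G(x)` on `I x`, and the ideal condition (f). -/
structure LiftingDatum (G : Type u) (A : Type v) [Groupoid G] [Ring A]
    (x : G) (τ : ∀ y : G, x ⟶ y) where
  I : G → Set A
  Iτ : G → Set A
  Iτi : G → Set A
  gτ : G → A → A
  gτi : G → A → A
  Ih : (x ⟶ x) → Set A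
  gh : (x ⟶ x) → A → A
  ideal_I : ∀ y : G, IsIdealIn (I y) Set.univ
  ideal_Iτ : ∀ y : G, IsIdealIn (Iτ y) (I y)
  ideal_Iτi : ∀ y : G, IsIdealIn (Iτi y) (I x)
  bij_τ : ∀ y : G, Set.BijOn (gτ y) (Iτi y) (Iτ y)
  inv_τ : ∀ y : G, Set.InvOn (gτi y) (gτ y) (Iτi y) (Iτ y)
  hom_τ : ∀ y : G, ∀ u ∈ Iτi y, ∀ v ∈ Iτi y,
    gτ y (u + v) = gτ y u + gτ y v ∧ gτ y (u * v) = gτ y u * gτ y v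
  Iτ_x : Iτ x = I x
  Iτi_x : Iτi x = I x
  gτ_x : ∀ u ∈ I x, gτ x u = u
  pga : IsPartialGroupActionOn x (I x) Ih gh
  ideal_lift : ∀ {a b : G} (g : a ⟶ b),
    IsIdealIn (gτ b '' (Iτi b ∩ gh (τ a ≫ g ≫ Groupoid.inv (τ b)) ''
      (Iτi a ∩ Ih (Groupoid.inv (τ a ≫ g ≫ Groupoid.inv (τ b)))))) (I b)

section Aux

variable {G : Type u} {A : Type v} [Groupoid G] [Ring A]

theorem isIdMor_id (y : G) : IsIdMor (𝟙 y) := ⟨rfl, by simp⟩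

theorem IsIdMor.cases {motive : ∀ {a b : G}, (a ⟶ b) → Prop}
    (H : ∀ y : G, motive (𝟙 y)) {a b : G} {g : a ⟶ b} (h : IsIdMor g) : motive g := by
  obtain ⟨e, hc⟩ := h
  subst e
  simp only [eqToHom_refl, Category.comp_id] at hc
  subst hc
  exact H _

theorem isIdMor_inv {a b : G} {g : a ⟶ b} (h : IsIdMor g) : IsIdMor (Groupoid.inv g) := by
  refine h.cases (motive := fun {a b} g => IsIdMor (Groupoid.inv g)) (fun y => ?_)
  show IsIdMor (Groupoid.inv (𝟙 y))
  have : Groupoid.inv (𝟙 y) = 𝟙 y := by simp [Groupoid.inv_eq_inv]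
  rw [this]; exact isIdMor_id y

theorem not_isIdMor_inv {a b : G} {g : a ⟶ b} (h : ¬ IsIdMor g) :
    ¬ IsIdMor (Groupoid.inv g) := fun hi => h (by
  have := isIdMor_inv hi
  rwa [show Groupoid.inv (Groupoid.inv g) = g by simp [Groupoid.inv_eq_inv]] at this)

variable {x : G} {τ : ∀ y : G, x ⟶ y}

/-- The conjugate `g_x = τ_{t g}⁻¹ g τ_{s g}` (written with inverses on the right). -/
def gxm (τ : ∀ y : G, x ⟶ y) {a b : G} (g : a ⟶ b) : x ⟶ x :=
  τ a ≫ g ≫ Groupoid.inv (τ b)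

theorem gxm_inv {a b : G} (g : a ⟶ b) :
    gxm τ (Groupoid.inv g) = Groupoid.inv (gxm τ g) := by
  simp [gxm, Groupoid.inv_eq_inv]

theorem gxm_comp {a b c : G} (h : a ⟶ b) (g : b ⟶ c) :
    gxm τ (h ≫ g) = gxm τ h ≫ gxm τ g := by
  simp [gxm, Groupoid.inv_eq_inv]

theorem gxm_id (y : G) : gxm τ (𝟙 y) = 𝟙 x := by
  simp [gxm, Groupoid.inv_eq_inv]

variable (d : LiftingDatum G A x τ)

theorem LiftingDatum.Ih_sub (k : x ⟶ x) : d.Ih k ⊆ d.I x := (d.pga.2.1 k).1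

theorem LiftingDatum.gh_bij (k : x ⟶ x) :
    Set.BijOn (d.gh k) (d.Ih (Groupoid.inv k)) (d.Ih k) := d.pga.2.2.1 k

theorem LiftingDatum.gh_comp (k₁ k₂ : x ⟶ x) {u : A} (hu : u ∈ d.Ih (Groupoid.inv k₁))
    (hu2 : d.gh k₁ u ∈ d.Ih (Groupoid.inv k₂)) :
    u ∈ d.Ih (Groupoid.inv (k₁ ≫ k₂)) ∧ d.gh (k₁ ≫ k₂) u = d.gh k₂ (d.gh k₁ u) :=
  d.pga.2.2.2.2.2 k₁ k₂ u hu hu2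

theorem LiftingDatum.gh_right_inv (k : x ⟶ x) {u : A} (hu : u ∈ d.Ih (Groupoid.inv k)) :
    d.gh (Groupoid.inv k) (d.gh k u) = u := by
  have h2 : d.gh k u ∈ d.Ih (Groupoid.inv (Groupoid.inv k)) := by
    rw [show Groupoid.inv (Groupoid.inv k) = k by simp [Groupoid.inv_eq_inv]]
    exact (d.gh_bij k).mapsTo hu
  have := (d.gh_comp k (Groupoid.inv k) hu h2).2
  rw [Groupoid.comp_inv] at this
  rw [← this]
  exact d.pga.2.2.2.2.1 u (d.Ih_sub _ hu)

theorem LiftingDatum.gh_left_inv (k : x ⟶ x) {u : A} (hu : u ∈ d.Ih k) :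
    d.gh k (d.gh (Groupoid.inv k) u) = u := by
  have := d.gh_right_inv (Groupoid.inv k)
    (u := u) (by rwa [show Groupoid.inv (Groupoid.inv k) = k by simp [Groupoid.inv_eq_inv]])
  rwa [show Groupoid.inv (Groupoid.inv k) = k by simp [Groupoid.inv_eq_inv]] at this

/-- The inner set of the lifted domain: `B_g = γ_{τ b} (W k a b)` for `k = g_x`. -/
def LiftingDatum.W (k : x ⟶ x) (a b : G) : Set A :=
  d.Iτi b ∩ d.gh k '' (d.Iτi a ∩ d.Ih (Groupoid.inv k))

theorem LiftingDatum.W_swap (k : x ⟶ x) (a b : G) {v : A}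
    (hv : v ∈ d.W (Groupoid.inv k) b a) :
    v ∈ d.Iτi a ∧ v ∈ d.Ih (Groupoid.inv k) ∧ d.gh k v ∈ d.W k a b ∧
      d.gh (Groupoid.inv k) (d.gh k v) = v := by
  obtain ⟨hv1, t, ⟨ht1, ht2⟩, rfl⟩ := hv
  rw [show Groupoid.inv (Groupoid.inv k) = k by simp [Groupoid.inv_eq_inv]] at ht2
  have hvIh : d.gh (Groupoid.inv k) t ∈ d.Ih (Groupoid.inv k) := by
    refine (d.gh_bij (Groupoid.inv k)).mapsTo ?_
    rwa [show Groupoid.inv (Groupoid.inv k) = k by simp [Groupoid.inv_eq_inv]]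
  have hgt : d.gh k (d.gh (Groupoid.inv k) t) = t := d.gh_left_inv k ht2
  refine ⟨hv1, hvIh, ?_, ?_⟩
  · rw [hgt]
    exact ⟨ht1, ⟨d.gh (Groupoid.inv k) t, ⟨hv1, hvIh⟩, hgt⟩⟩
  · rw [hgt]

theorem LiftingDatum.W_swap' (k : x ⟶ x) (a b : G) {t : A}
    (ht : t ∈ d.W k a b) :
    t ∈ d.Iτi b ∧ t ∈ d.Ih k ∧ d.gh (Groupoid.inv k) t ∈ d.W (Groupoid.inv k) b a ∧
      d.gh k (d.gh (Groupoid.inv k) t) = t := by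
  have := d.W_swap (Groupoid.inv k) b a (v := t)
  rw [show Groupoid.inv (Groupoid.inv k) = k by simp [Groupoid.inv_eq_inv]] at this
  exact this ht

theorem LiftingDatum.gτi_gτ (y : G) {u : A} (hu : u ∈ d.Iτi y) :
    d.gτi y (d.gτ y u) = u := (d.inv_τ y).1 hu

open Classical in
/-- The lifted domains. -/
noncomputable def LiftingDatum.D {a b : G} (g : a ⟶ b) : Set A :=
  if IsIdMor g then d.I b
  else d.gτ b '' (d.W (gxm τ g) a b)

open Classical in
/-- The lifted maps. -/
noncomputable def LiftingDatum.F {a b : G} (g : a ⟶ b) : A → A :=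
  if IsIdMor g then id
  else fun u => d.gτ b (d.gh (gxm τ g) (d.gτi a u))

theorem LiftingDatum.D_pos {a b : G} {g : a ⟶ b} (h : IsIdMor g) : d.D g = d.I b := if_pos h

theorem LiftingDatum.D_neg {a b : G} {g : a ⟶ b} (h : ¬ IsIdMor g) :
    d.D g = d.gτ b '' (d.W (gxm τ g) a b) := if_neg h

theorem LiftingDatum.F_pos {a b : G} {g : a ⟶ b} (h : IsIdMor g) (u : A) : d.F g u = u := by
  rw [LiftingDatum.F, if_pos h]; rfl

theorem LiftingDatum.F_neg {a b : G} {g : a ⟶ b} (h : ¬ IsIdMor g) (u : A) :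
    d.F g u = d.gτ b (d.gh (gxm τ g) (d.gτi a u)) := by
  rw [LiftingDatum.F, if_neg h]

theorem LiftingDatum.D_inv_neg {a b : G} {g : a ⟶ b} (h : ¬ IsIdMor g) :
    d.D (Groupoid.inv g) = d.gτ a '' (d.W (Groupoid.inv (gxm τ g)) b a) := by
  rw [d.D_neg (not_isIdMor_inv h), gxm_inv]

theorem LiftingDatum.F_eval {a b : G} {g : a ⟶ b} (h : ¬ IsIdMor g) {v : A}
    (hv : v ∈ d.Iτi a) :
    d.F g (d.gτ a v) = d.gτ b (d.gh (gxm τ g) v) := by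
  rw [d.F_neg h, d.gτi_gτ a hv]


theorem LiftingDatum.ideal_obj' (y : G) : IsIdealIn (d.D (𝟙 y)) Set.univ := by
  rw [d.D_pos (isIdMor_id y)]
  exact d.ideal_I y

theorem LiftingDatum.ideal_mor' {a b : G} (g : a ⟶ b) : IsIdealIn (d.D g) (d.D (𝟙 b)) := by
  by_cases hid : IsIdMor g
  · rw [d.D_pos hid, d.D_pos (isIdMor_id b)]
    obtain ⟨-, h0, hadd, hneg, hmul⟩ := d.ideal_I b
    exact ⟨subset_rfl, h0, hadd, hneg, fun r hr => hmul r (Set.mem_univ r)⟩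
  · rw [d.D_neg hid, d.D_pos (isIdMor_id b)]
    exact d.ideal_lift g

theorem LiftingDatum.bij' {a b : G} (g : a ⟶ b) :
    Set.BijOn (d.F g) (d.D (Groupoid.inv g)) (d.D g) := by
  by_cases hid : IsIdMor g
  · obtain ⟨e, hc⟩ := hid
    subst e
    simp only [eqToHom_refl, Category.comp_id] at hc
    subst hc
    rw [show Groupoid.inv (𝟙 _) = 𝟙 _ by simp [Groupoid.inv_eq_inv],
      d.D_pos (isIdMor_id _)]
    exact (Set.bijOn_id _).congr fun u _ => (d.F_pos (isIdMor_id _) u).symm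
  · rw [d.D_neg hid, d.D_inv_neg hid]
    refine ⟨?_, ?_, ?_⟩
    · rintro _ ⟨v, hv, rfl⟩
      obtain ⟨hv1, hv2, hv3, hv4⟩ := d.W_swap (gxm τ g) a b hv
      rw [d.F_eval hid hv1]
      exact ⟨_, hv3, rfl⟩
    · rintro _ ⟨v₁, hv₁, rfl⟩ _ ⟨v₂, hv₂, rfl⟩ heq
      obtain ⟨hv₁1, hv₁2, hv₁3, hv₁4⟩ := d.W_swap (gxm τ g) a b hv₁
      obtain ⟨hv₂1, hv₂2, hv₂3, hv₂4⟩ := d.W_swap (gxm τ g) a b hv₂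
      rw [d.F_eval hid hv₁1, d.F_eval hid hv₂1] at heq
      have h1 : d.gh (gxm τ g) v₁ = d.gh (gxm τ g) v₂ :=
        (d.bij_τ b).injOn hv₁3.1 hv₂3.1 heq
      have h2 : v₁ = v₂ := by rw [← hv₁4, h1, hv₂4]
      rw [h2]
    · rintro _ ⟨t, ht, rfl⟩
      obtain ⟨ht1, ht2, ht3, ht4⟩ := d.W_swap' (gxm τ g) a b ht
      refine ⟨d.gτ a (d.gh (Groupoid.inv (gxm τ g)) t), ⟨_, ht3, rfl⟩, ?_⟩
      rw [d.F_eval hid ht3.1, ht4]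

theorem LiftingDatum.map_add' {a b : G} (g : a ⟶ b) :
    ∀ u ∈ d.D (Groupoid.inv g), ∀ v ∈ d.D (Groupoid.inv g),
      d.F g (u + v) = d.F g u + d.F g v := by
  intro u hu v hv
  by_cases hid : IsIdMor g
  · simp only [d.F_pos hid]
  · rw [d.D_inv_neg hid] at hu hv
    obtain ⟨v₁, hv₁, rfl⟩ := hu
    obtain ⟨v₂, hv₂, rfl⟩ := hv
    obtain ⟨hv₁1, hv₁2, hv₁3, hv₁4⟩ := d.W_swap (gxm τ g) a b hv₁
    obtain ⟨hv₂1, hv₂2, hv₂3, hv₂4⟩ := d.W_swap (gxm τ g) a b hv₂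
    have hadd : v₁ + v₂ ∈ d.Iτi a := (d.ideal_Iτi a).2.2.1 v₁ hv₁1 v₂ hv₂1
    rw [show d.gτ a v₁ + d.gτ a v₂ = d.gτ a (v₁ + v₂) from
      ((d.hom_τ a) v₁ hv₁1 v₂ hv₂1).1.symm, d.F_eval hid hadd, d.F_eval hid hv₁1,
      d.F_eval hid hv₂1,
      show d.gh (gxm τ g) (v₁ + v₂) = d.gh (gxm τ g) v₁ + d.gh (gxm τ g) v₂ from
        (d.pga.2.2.2.1 (gxm τ g) v₁ hv₁2 v₂ hv₂2).1]
    exact ((d.hom_τ b) _ hv₁3.1 _ hv₂3.1).1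

theorem LiftingDatum.map_mul' {a b : G} (g : a ⟶ b) :
    ∀ u ∈ d.D (Groupoid.inv g), ∀ v ∈ d.D (Groupoid.inv g),
      d.F g (u * v) = d.F g u * d.F g v := by
  intro u hu v hv
  by_cases hid : IsIdMor g
  · simp only [d.F_pos hid]
  · rw [d.D_inv_neg hid] at hu hv
    obtain ⟨v₁, hv₁, rfl⟩ := hu
    obtain ⟨v₂, hv₂, rfl⟩ := hv
    obtain ⟨hv₁1, hv₁2, hv₁3, hv₁4⟩ := d.W_swap (gxm τ g) a b hv₁
    obtain ⟨hv₂1, hv₂2, hv₂3, hv₂4⟩ := d.W_swap (gxm τ g) a b hv₂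
    have hmul : v₁ * v₂ ∈ d.Iτi a :=
      ((d.ideal_Iτi a).2.2.2.2 v₁ ((d.ideal_Iτi a).1 hv₁1) v₂ hv₂1).1
    rw [show d.gτ a v₁ * d.gτ a v₂ = d.gτ a (v₁ * v₂) from
      ((d.hom_τ a) v₁ hv₁1 v₂ hv₂1).2.symm, d.F_eval hid hmul, d.F_eval hid hv₁1,
      d.F_eval hid hv₂1,
      show d.gh (gxm τ g) (v₁ * v₂) = d.gh (gxm τ g) v₁ * d.gh (gxm τ g) v₂ from
        (d.pga.2.2.2.1 (gxm τ g) v₁ hv₁2 v₂ hv₂2).2]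
    exact ((d.hom_τ b) _ hv₁3.1 _ hv₂3.1).2

theorem LiftingDatum.comp' {a b c : G} (h : a ⟶ b) (g : b ⟶ c) :
    ∀ u ∈ d.D (Groupoid.inv h), d.F h u ∈ d.D (Groupoid.inv g) →
      u ∈ d.D (Groupoid.inv (h ≫ g)) ∧ d.F (h ≫ g) u = d.F g (d.F h u) := by
  intro u hu hfu
  by_cases hh : IsIdMor h
  · obtain ⟨e, hc⟩ := hh
    subst e
    simp only [eqToHom_refl, Category.comp_id] at hc
    subst hc
    rw [d.F_pos (isIdMor_id _)] at hfu
    rw [Category.id_comp, d.F_pos (isIdMor_id _)]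
    exact ⟨hfu, rfl⟩
  by_cases hg : IsIdMor g
  · obtain ⟨e, hc⟩ := hg
    subst e
    simp only [eqToHom_refl, Category.comp_id] at hc
    subst hc
    rw [Category.comp_id, d.F_pos (isIdMor_id _)]
    exact ⟨hu, rfl⟩
  -- both non-identity
  rw [d.D_inv_neg hh] at hu
  obtain ⟨v, hv, rfl⟩ := hu
  obtain ⟨hv1, hv2, hv3, hv4⟩ := d.W_swap (gxm τ h) a b hv
  rw [d.F_eval hh hv1] at hfu
  rw [d.D_inv_neg hg] at hfu
  obtain ⟨w, hw, heq⟩ := hfu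
  have hkv_b : d.gh (gxm τ h) v ∈ d.Iτi b := hv3.1
  have hww : w = d.gh (gxm τ h) v :=
    (d.bij_τ b).injOn (d.W_swap (gxm τ g) b c hw).1 hkv_b heq
  rw [hww] at hw
  obtain ⟨hw1, hw2, hw3, hw4⟩ := d.W_swap (gxm τ g) b c hw
  obtain ⟨hvc, hcomp⟩ := d.gh_comp (gxm τ h) (gxm τ g) hv2 hw2
  by_cases hhg : IsIdMor (h ≫ g)
  · obtain ⟨e, hc⟩ := hhg
    subst e
    simp only [eqToHom_refl, Category.comp_id] at hc
    have hk : gxm τ h ≫ gxm τ g = 𝟙 x := by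
      rw [← gxm_comp h g, hc, gxm_id]
    have hgh1 : d.gh (gxm τ h ≫ gxm τ g) v = v := by
      rw [hk]
      exact d.pga.2.2.2.2.1 v ((d.ideal_Iτi _).1 hv1)
    constructor
    · rw [hc, show Groupoid.inv (𝟙 _) = 𝟙 _ by simp [Groupoid.inv_eq_inv],
        d.D_pos (isIdMor_id _)]
      exact (d.ideal_Iτ _).1 ((d.bij_τ _).mapsTo hv1)
    · rw [hc, d.F_pos (isIdMor_id _), d.F_eval hh hv1, d.F_eval hg hkv_b,
        ← hcomp, hgh1]
  · have hk3 : gxm τ (h ≫ g) = gxm τ h ≫ gxm τ g := gxm_comp h g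
    constructor
    · rw [d.D_inv_neg hhg, hk3]
      refine ⟨v, ⟨hv1, ?_⟩, rfl⟩
      refine ⟨d.gh (gxm τ h ≫ gxm τ g) v, ⟨?_, ?_⟩, ?_⟩
      · rw [hcomp]
        exact hw3.1
      · rw [show Groupoid.inv (Groupoid.inv (gxm τ h ≫ gxm τ g)) = gxm τ h ≫ gxm τ g by
          simp [Groupoid.inv_eq_inv]]
        exact (d.gh_bij _).mapsTo hvc
      · exact d.gh_right_inv _ hvc
    · rw [d.F_eval hhg hv1, d.F_eval hh hv1, d.F_eval hg hkv_b, hk3, hcomp]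


end Aux

/-- Lifting a datum to a partial groupoid action: given a connected groupoid `G`,
an object `x`, a transversal `τ` and a datum `(I, γ_{τ(x)}, γ_{(x)})`, there is a
partial action `β` of `G` on `A` with `β_y` the identity of `I y` for objects `y`,
and for non-identity `g`, `β_g = γ_{τ_{t g}} ∘ γ_{g_x} ∘ γ_{τ_{s g}}⁻¹` with range
`B_g = γ_{τ_{t g}} (I_{τ_{t g}⁻¹} ∩ γ_{g_x} (I_{τ_{s g}⁻¹} ∩ I_{g_x⁻¹}))`. -/
theorem stmt10 {G : Type u} {A : Type v} [Groupoid G] [Ring A]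
    (hconn : ∀ a b : G, Nonempty (a ⟶ b)) (x : G) (τ : ∀ y : G, x ⟶ y)
    (hτ : τ x = 𝟙 x) (d : LiftingDatum G A x τ) :
    ∃ β : PartialGroupoidAction G A,
      (∀ y : G, β.D (𝟙 y) = d.I y) ∧
      (∀ (a b : G) (g : a ⟶ b), ¬ IsIdMor g →
        β.D g = d.gτ b '' (d.Iτi b ∩ d.gh (τ a ≫ g ≫ Groupoid.inv (τ b)) ''
            (d.Iτi a ∩ d.Ih (Groupoid.inv (τ a ≫ g ≫ Groupoid.inv (τ b))))) ∧
        ∀ u ∈ β.D (Groupoid.inv g),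
          β.f g u = d.gτ b (d.gh (τ a ≫ g ≫ Groupoid.inv (τ b)) (d.gτi a u))) := by
  refine ⟨⟨d.D, d.F, d.ideal_obj', fun {a b} g => d.ideal_mor' g, fun {a b} g => d.bij' g,
    fun {a b} g => d.map_add' g, fun {a b} g => d.map_mul' g,
    fun y u _ => d.F_pos (isIdMor_id y) u, fun {a b c} h g => d.comp' h g⟩,
    fun y => d.D_pos (isIdMor_id y),
    fun a b g hng => ⟨d.D_neg hng, fun u _ => d.F_neg hng u⟩⟩
end

section
/- Let α = (A_g, α_g)_{g ∈ G} be a partial action of a connected groupoid G on a ring A, x a fixed object with transversal τ(x), and let β be the lifted partial action obtained from the datum (A_α, α_{τ(x)}, α_{(x)}) associated to α, i.e., β_g = α_{τ_{t(g)}} ∘ α_{g_x} ∘ α_{τ_{s(g)}}⁻¹ for g not an identity. Then β_g ≤ α_g (α_g extends β_g) for all g, and moreover B_g = A_g ∩ (A_{τ_{t(g)}} ∩ A_{g τ_{s(g)}}) for all non-identity morphisms g; in particular β = α if and only if A_g ⊆ A_{τ_{t(g)}} ∩ A_{g τ_{s(g)}} for every non-identity morphism g. -/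
open CategoryTheory

universe u v w

section Helpers

variable {G : Type u} {A : Type v} [Groupoid G] [Ring A] (α : PartialGroupoidAction G A)

lemma PGA.ginv_ginv {a b : G} (g : a ⟶ b) : Groupoid.inv (Groupoid.inv g) = g := by
  simp [Groupoid.inv_eq_inv]

lemma PGA.maps {a b : G} (g : a ⟶ b) {u : A} (hu : u ∈ α.D (Groupoid.inv g)) :
    α.f g u ∈ α.D g := (α.bij g).mapsTo hu

lemma PGA.maps' {a b : G} (g : a ⟶ b) {t : A} (ht : t ∈ α.D g) :
    α.f (Groupoid.inv g) t ∈ α.D (Groupoid.inv g) := by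
  have h := (α.bij (Groupoid.inv g)).mapsTo
  rw [PGA.ginv_ginv] at h
  exact h ht

lemma PGA.left_inv {a b : G} (g : a ⟶ b) {u : A} (hu : u ∈ α.D (Groupoid.inv g)) :
    α.f (Groupoid.inv g) (α.f g u) = u := by
  have h1 : α.f g u ∈ α.D (Groupoid.inv (Groupoid.inv g)) := by
    rw [PGA.ginv_ginv]; exact PGA.maps α g hu
  have h2 := α.comp g (Groupoid.inv g) u hu h1
  rw [Groupoid.comp_inv] at h2
  have h3 : u ∈ α.D (𝟙 a) := (α.ideal_mor (Groupoid.inv g)).1 hu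
  rw [← h2.2, α.id_act a u h3]

lemma PGA.right_inv {a b : G} (g : a ⟶ b) {t : A} (ht : t ∈ α.D g) :
    α.f g (α.f (Groupoid.inv g) t) = t := by
  have h := PGA.left_inv α (Groupoid.inv g) (u := t)
    (by rw [PGA.ginv_ginv]; exact ht)
  rwa [PGA.ginv_ginv] at h

lemma PGA.key1 {x a b : G} (ta : x ⟶ a) (tb : x ⟶ b) (g : a ⟶ b)
    {v : A} (hv : v ∈ α.D ta)
    (h1 : α.f (Groupoid.inv ta) v ∈ α.D (Groupoid.inv (ta ≫ g ≫ Groupoid.inv tb)))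
    (h2 : α.f (ta ≫ g ≫ Groupoid.inv tb) (α.f (Groupoid.inv ta) v) ∈
      α.D (Groupoid.inv tb)) :
    v ∈ α.D (Groupoid.inv g) ∧
      α.f g v = α.f tb (α.f (ta ≫ g ≫ Groupoid.inv tb) (α.f (Groupoid.inv ta) v)) := by
  have hv' : v ∈ α.D (Groupoid.inv (Groupoid.inv ta)) := by
    rw [PGA.ginv_ginv]; exact hv
  have c1 := α.comp (Groupoid.inv ta) (ta ≫ g ≫ Groupoid.inv tb) v hv' h1
  have e1 : Groupoid.inv ta ≫ ta ≫ g ≫ Groupoid.inv tb = g ≫ Groupoid.inv tb := by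
    rw [← Category.assoc, Groupoid.inv_comp, Category.id_comp]
  rw [e1] at c1
  have c2 := α.comp (g ≫ Groupoid.inv tb) tb v c1.1 (by rw [c1.2]; exact h2)
  have e2 : (g ≫ Groupoid.inv tb) ≫ tb = g := by
    rw [Category.assoc, Groupoid.inv_comp, Category.comp_id]
  rw [e2] at c2
  exact ⟨c2.1, by rw [c2.2, c1.2]⟩

lemma PGA.key2 {x a b : G} (ta : x ⟶ a) (tb : x ⟶ b) (g : a ⟶ b) :
    α.f tb '' (α.D (Groupoid.inv tb) ∩
        α.f (ta ≫ g ≫ Groupoid.inv tb) ''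
          (α.D (Groupoid.inv ta) ∩ α.D (Groupoid.inv (ta ≫ g ≫ Groupoid.inv tb)))) =
      α.D g ∩ (α.D tb ∩ α.D (ta ≫ g)) := by
  ext t
  constructor
  · rintro ⟨u, ⟨hu1, w, ⟨hw1, hw2⟩, rfl⟩, rfl⟩
    have hv1 : α.f ta w ∈ α.D ta := PGA.maps α ta hw1
    have hvw : α.f (Groupoid.inv ta) (α.f ta w) = w := PGA.left_inv α ta hw1
    obtain ⟨hvg, heq⟩ := PGA.key1 α ta tb g hv1 (by rw [hvw]; exact hw2)
      (by rw [hvw]; exact hu1)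
    rw [hvw] at heq
    refine ⟨?_, PGA.maps α tb hu1, ?_⟩
    · rw [← heq]; exact PGA.maps α g hvg
    · have c := α.comp ta g w hw1 hvg
      rw [← heq, ← c.2]
      exact PGA.maps α (ta ≫ g) c.1
  · rintro ⟨htg, htb, htag⟩
    have hu : α.f (Groupoid.inv tb) t ∈ α.D (Groupoid.inv tb) := PGA.maps' α tb htb
    have hut : α.f tb (α.f (Groupoid.inv tb) t) = t := PGA.right_inv α tb htb
    have hw0 : α.f (Groupoid.inv (ta ≫ g)) t ∈ α.D (Groupoid.inv (ta ≫ g)) :=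
      PGA.maps' α (ta ≫ g) htag
    have hwt : α.f (ta ≫ g) (α.f (Groupoid.inv (ta ≫ g)) t) = t :=
      PGA.right_inv α (ta ≫ g) htag
    have c1 := α.comp (ta ≫ g) (Groupoid.inv g) (α.f (Groupoid.inv (ta ≫ g)) t) hw0
      (by rw [hwt, PGA.ginv_ginv]; exact htg)
    have e1 : (ta ≫ g) ≫ Groupoid.inv g = ta := by
      rw [Category.assoc, Groupoid.comp_inv, Category.comp_id]
    rw [e1] at c1
    have c2 := α.comp (ta ≫ g) (Groupoid.inv tb) (α.f (Groupoid.inv (ta ≫ g)) t) hw0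
      (by rw [hwt, PGA.ginv_ginv]; exact htb)
    have e2 : (ta ≫ g) ≫ Groupoid.inv tb = ta ≫ g ≫ Groupoid.inv tb := by
      rw [Category.assoc]
    rw [e2] at c2
    refine ⟨α.f (Groupoid.inv tb) t,
      ⟨hu, α.f (Groupoid.inv (ta ≫ g)) t, ⟨c1.1, c2.1⟩, ?_⟩, hut⟩
    rw [c2.2, hwt]

end Helpers

/-- Let `α` be a partial action of a connected groupoid and `β` the lifted partial
action from the datum associated to `α` (so `β_g = α_{τ_{t g}} ∘ α_{g_x} ∘ α_{τ_{s g}}⁻¹`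
with domain described intrinsically).  Then `β_g ≤ α_g` for all `g`; moreover for all
non-identity `g`, `B_g = A_g ∩ (A_{τ_{t g}} ∩ A_{g τ_{s g}})`; in particular `β = α`
iff `A_g ⊆ A_{τ_{t g}} ∩ A_{g τ_{s g}}` for all non-identity `g`. -/
theorem stmt11 {G : Type u} {A : Type v} [Groupoid G] [Ring A]
    (hconn : ∀ a b : G, Nonempty (a ⟶ b)) (x : G) (τ : ∀ y : G, x ⟶ y)
    (hτ : τ x = 𝟙 x) (α : PartialGroupoidAction G A) :
    (∀ (a b : G) (g : a ⟶ b), ∀ v ∈ α.D (τ a),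
      α.f (Groupoid.inv (τ a)) v ∈ α.D (Groupoid.inv (τ a ≫ g ≫ Groupoid.inv (τ b))) →
      α.f (τ a ≫ g ≫ Groupoid.inv (τ b)) (α.f (Groupoid.inv (τ a)) v) ∈
          α.D (Groupoid.inv (τ b)) →
      v ∈ α.D (Groupoid.inv g) ∧
        α.f g v =
          α.f (τ b) (α.f (τ a ≫ g ≫ Groupoid.inv (τ b)) (α.f (Groupoid.inv (τ a)) v))) ∧
    (∀ (a b : G) (g : a ⟶ b), ¬ IsIdMor g →
      α.f (τ b) '' (α.D (Groupoid.inv (τ b)) ∩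
          α.f (τ a ≫ g ≫ Groupoid.inv (τ b)) ''
            (α.D (Groupoid.inv (τ a)) ∩
              α.D (Groupoid.inv (τ a ≫ g ≫ Groupoid.inv (τ b))))) =
        α.D g ∩ (α.D (τ b) ∩ α.D (τ a ≫ g))) ∧
    ((∀ (a b : G) (g : a ⟶ b), ¬ IsIdMor g →
        α.f (τ b) '' (α.D (Groupoid.inv (τ b)) ∩
            α.f (τ a ≫ g ≫ Groupoid.inv (τ b)) ''
              (α.D (Groupoid.inv (τ a)) ∩
                α.D (Groupoid.inv (τ a ≫ g ≫ Groupoid.inv (τ b))))) = α.D g) ↔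
      (∀ (a b : G) (g : a ⟶ b), ¬ IsIdMor g →
        α.D g ⊆ α.D (τ b) ∩ α.D (τ a ≫ g))) := by
  refine ⟨fun a b g v hv h1 h2 => PGA.key1 α (τ a) (τ b) g hv h1 h2,
    fun a b g _ => PGA.key2 α (τ a) (τ b) g, ?_, ?_⟩
  · intro H a b g hg
    have h := H a b g hg
    rw [PGA.key2] at h
    intro t ht
    rw [← h] at ht
    exact ht.2
  · intro H a b g hg
    rw [PGA.key2]
    exact Set.inter_eq_self_of_subset_left (H a b g hg)
end

section
/- Let α be a partial action of a connected groupoid G on a ring A which is τ(x)-global, i.e., A_{τ_y⁻¹} = A_x and A_{τ_y} = A_y for all objects y. Define A*_u = A_{t(u)} for u = (y,z) in the pair groupoid G₀ × G₀ and α*_u = α_{τ_{t(u)}} ∘ α_{τ_{s(u)}⁻¹}. Then α* = (A*_u, α*_u)_{u ∈ G₀²} is a global action of the pair groupoid G₀ × G₀ on A. -/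
open CategoryTheory

universe u v w

/-- If `α` is `τ(x)`-global (`A_{τ_y⁻¹} = A_x` and `A_{τ_y} = A_y` for all `y`), then
`α*_{(y,z)} = α_{τ_z} ∘ α_{τ_y⁻¹} : A_y → A_z` defines a global action of the pair
groupoid `G₀ × G₀` on `A`: each `α*_{(y,y)}` is the identity of `A_y`, each `α*_{(y,z)}`
is a ring isomorphism from `A_y = A*_{(y,z)⁻¹}` onto `A_z = A*_{(y,z)}`, and
`α*_{(y,z)} ∘ α*_{(r,y)} = α*_{(r,z)}` on `A_r`. -/
theorem stmt12 {G : Type u} {A : Type v} [Groupoid G] [Ring A]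
    (hconn : ∀ a b : G, Nonempty (a ⟶ b)) (x : G) (τ : ∀ y : G, x ⟶ y)
    (hτ : τ x = 𝟙 x) (α : PartialGroupoidAction G A)
    (hglob : ∀ y : G, α.D (Groupoid.inv (τ y)) = α.D (𝟙 x) ∧ α.D (τ y) = α.D (𝟙 y)) :
    (∀ y : G, ∀ v ∈ α.D (𝟙 y), α.f (τ y) (α.f (Groupoid.inv (τ y)) v) = v) ∧
    (∀ y z : G, Set.BijOn (fun v => α.f (τ z) (α.f (Groupoid.inv (τ y)) v))
        (α.D (𝟙 y)) (α.D (𝟙 z))) ∧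
    (∀ y z : G, ∀ u ∈ α.D (𝟙 y), ∀ v ∈ α.D (𝟙 y),
      α.f (τ z) (α.f (Groupoid.inv (τ y)) (u + v)) =
          α.f (τ z) (α.f (Groupoid.inv (τ y)) u) + α.f (τ z) (α.f (Groupoid.inv (τ y)) v) ∧
      α.f (τ z) (α.f (Groupoid.inv (τ y)) (u * v)) =
          α.f (τ z) (α.f (Groupoid.inv (τ y)) u) * α.f (τ z) (α.f (Groupoid.inv (τ y)) v)) ∧
    (∀ r y z : G, ∀ v ∈ α.D (𝟙 r),
      α.f (τ z) (α.f (Groupoid.inv (τ y)) (α.f (τ y) (α.f (Groupoid.inv (τ r)) v))) =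
        α.f (τ z) (α.f (Groupoid.inv (τ r)) v)) := by
  have hii : ∀ {a b : G} (g : a ⟶ b), Groupoid.inv (Groupoid.inv g) = g := by
    intro a b g; simp [Groupoid.inv_eq_inv]
  have hDy : ∀ y : G, α.D (Groupoid.inv (Groupoid.inv (τ y))) = α.D (𝟙 y) := by
    intro y; rw [hii]; exact (hglob y).2
  -- inverse-of-inverse bijection
  have bij1 : ∀ y : G, Set.BijOn (α.f (Groupoid.inv (τ y))) (α.D (𝟙 y)) (α.D (𝟙 x)) := by
    intro y
    have := α.bij (Groupoid.inv (τ y))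
    rwa [hDy, (hglob y).1] at this
  have bij2 : ∀ z : G, Set.BijOn (α.f (τ z)) (α.D (𝟙 x)) (α.D (𝟙 z)) := by
    intro z
    have := α.bij (τ z)
    rwa [(hglob z).1, (hglob z).2] at this
  have key1 : ∀ y : G, ∀ v ∈ α.D (𝟙 y), α.f (τ y) (α.f (Groupoid.inv (τ y)) v) = v := by
    intro y v hv
    have hv' : v ∈ α.D (Groupoid.inv (Groupoid.inv (τ y))) := by rw [hDy]; exact hv
    have hmem : α.f (Groupoid.inv (τ y)) v ∈ α.D (Groupoid.inv (τ y)) :=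
      (α.bij (Groupoid.inv (τ y))).mapsTo hv'
    have hc := α.comp (Groupoid.inv (τ y)) (τ y) v hv' hmem
    rw [← hc.2, Groupoid.inv_comp, α.id_act y v hv]
  have key2 : ∀ y : G, ∀ u ∈ α.D (𝟙 x), α.f (Groupoid.inv (τ y)) (α.f (τ y) u) = u := by
    intro y u hu
    have hu' : u ∈ α.D (Groupoid.inv (τ y)) := by rw [(hglob y).1]; exact hu
    have hmem : α.f (τ y) u ∈ α.D (Groupoid.inv (Groupoid.inv (τ y))) := by
      rw [hDy]; exact (bij2 y).mapsTo hu
    have hc := α.comp (τ y) (Groupoid.inv (τ y)) u hu' hmem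
    rw [← hc.2, Groupoid.comp_inv, α.id_act x u hu]
  refine ⟨key1, ?_, ?_, ?_⟩
  · intro y z
    exact (bij2 z).comp (bij1 y)
  · intro y z u hu v hv
    have hu' : u ∈ α.D (Groupoid.inv (Groupoid.inv (τ y))) := by rw [hDy]; exact hu
    have hv' : v ∈ α.D (Groupoid.inv (Groupoid.inv (τ y))) := by rw [hDy]; exact hv
    have hfu : α.f (Groupoid.inv (τ y)) u ∈ α.D (Groupoid.inv (τ z)) := by
      rw [(hglob z).1]; exact (bij1 y).mapsTo hu
    have hfv : α.f (Groupoid.inv (τ y)) v ∈ α.D (Groupoid.inv (τ z)) := by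
      rw [(hglob z).1]; exact (bij1 y).mapsTo hv
    constructor
    · rw [α.map_add (Groupoid.inv (τ y)) u hu' v hv', α.map_add (τ z) _ hfu _ hfv]
    · rw [α.map_mul (Groupoid.inv (τ y)) u hu' v hv', α.map_mul (τ z) _ hfu _ hfv]
  · intro r y z v hv
    rw [key2 y _ ((bij1 r).mapsTo hv)]
end

section
/- Let G be a finite connected groupoid, β a lifted, τ(x)-global, γ-unital partial action of G on a ring A = ⊕_{y ∈ G₀} B_y with each B_g = A·1_g for central idempotents 1_g. An element b = Σ_{y ∈ G₀} b_y (b_y ∈ B_y) lies in the invariant subring A^β if and only if b_x is invariant under the partial group action γ_{(x)} of G(x) on B_x and b_y = γ_{τ_y}(b_x) for all objects y. -/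
open CategoryTheory

universe u v w

/-- The setting of Sections 6–8 of the paper: a finite connected groupoid `G` with a
fixed object `x` and transversal `τ`, and a partial action `act` of `G` on `A` which is
unital (`D g = A·(e g)` for central idempotents `e g`), `τ(x)`-global, lifted from a
datum (i.e. `f g = γ_{τ_{t g}} ∘ γ_{g_x} ∘ γ_{τ_{s g}}⁻¹`), and `A = ⊕_{y} D (𝟙 y)`. -/
structure LiftedSetting (G : Type u) (A : Type v) [Groupoid G] [Ring A] [Fintype G]
    [∀ a b : G, Fintype (a ⟶ b)] (x : G) (τ : ∀ y : G, x ⟶ y) where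
  act : PartialGroupoidAction G A
  e : ∀ {a b : G}, (a ⟶ b) → A
  e_central : ∀ {a b : G} (g : a ⟶ b) (r : A), e g * r = r * e g
  e_idem : ∀ {a b : G} (g : a ⟶ b), e g * e g = e g
  D_eq : ∀ {a b : G} (g : a ⟶ b), act.D g = {u : A | u * e g = u}
  tau_id : τ x = 𝟙 x
  tau_global_inv : ∀ y : G, act.D (Groupoid.inv (τ y)) = act.D (𝟙 x)
  tau_global : ∀ y : G, act.D (τ y) = act.D (𝟙 y)
  lifted : ∀ {a b : G} (g : a ⟶ b), ∀ u ∈ act.D (Groupoid.inv g),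
    act.f g u =
      act.f (τ b) (act.f (τ a ≫ g ≫ Groupoid.inv (τ b)) (act.f (Groupoid.inv (τ a)) u))
  orth : ∀ y z : G, y ≠ z → e (𝟙 y) * e (𝟙 z) = 0
  sum_id_one : (∑ y : G, e (𝟙 y)) = 1


section Helpers

variable {G : Type u} {A : Type v} [Groupoid G] [Ring A] [Fintype G]
    [∀ a b : G, Fintype (a ⟶ b)] {x : G} {τ : ∀ y : G, x ⟶ y}

lemma ginv_inv {a c : G} (g : a ⟶ c) : Groupoid.inv (Groupoid.inv g) = g := by
  simp [Groupoid.inv_eq_inv]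

variable (S : LiftedSetting G A x τ)

lemma memD {a c : G} {g : a ⟶ c} {u : A} : u ∈ S.act.D g ↔ u * S.e g = u := by
  rw [S.D_eq]; rfl

lemma eMem {a c : G} (g : a ⟶ c) : S.e g ∈ S.act.D g := (memD S).2 (S.e_idem g)

lemma mulEMem {a c : G} (g : a ⟶ c) (r : A) : r * S.e g ∈ S.act.D g :=
  (memD S).2 (by rw [mul_assoc, S.e_idem])

lemma DSub {a c : G} (g : a ⟶ c) : S.act.D g ⊆ S.act.D (𝟙 c) := (S.act.ideal_mor g).1

lemma eAbsorb {a c : G} (g : a ⟶ c) : S.e g * S.e (𝟙 c) = S.e g :=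
  (memD S).1 (DSub S g (eMem S g))

lemma eAbsorb' {a c : G} (g : a ⟶ c) : S.e (𝟙 c) * S.e g = S.e g := by
  rw [S.e_central]; exact eAbsorb S g

lemma eEqOfDEq {a c a' c' : G} (g : a ⟶ c) (g' : a' ⟶ c')
    (hD : S.act.D g = S.act.D g') : S.e g = S.e g' := by
  have h1 : S.e g * S.e g' = S.e g := (memD S).1 (hD ▸ eMem S g)
  have h2 : S.e g' * S.e g = S.e g' := (memD S).1 (hD.symm ▸ eMem S g')
  calc S.e g = S.e g * S.e g' := h1.symm
    _ = S.e g' * S.e g := S.e_central g (S.e g')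
    _ = S.e g' := h2

lemma fMem {a c : G} (g : a ⟶ c) {u : A} (hu : u ∈ S.act.D (Groupoid.inv g)) :
    S.act.f g u ∈ S.act.D g := (S.act.bij g).mapsTo hu

lemma fInvF {a c : G} (g : a ⟶ c) (u : A) (hu : u ∈ S.act.D (Groupoid.inv g)) :
    S.act.f (Groupoid.inv g) (S.act.f g u) = u := by
  have h2 : S.act.f g u ∈ S.act.D (Groupoid.inv (Groupoid.inv g)) := by
    rw [ginv_inv]; exact fMem S g hu
  have hc := (S.act.comp g (Groupoid.inv g) u hu h2).2
  rw [Groupoid.comp_inv] at hc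
  have hid : u ∈ S.act.D (𝟙 a) := DSub S (Groupoid.inv g) hu
  rw [← hc, S.act.id_act a u hid]

lemma fFInv {a c : G} (g : a ⟶ c) (v : A) (hv : v ∈ S.act.D g) :
    S.act.f g (S.act.f (Groupoid.inv g) v) = v := by
  have := fInvF S (Groupoid.inv g) v (by rw [ginv_inv]; exact hv)
  rwa [ginv_inv] at this

lemma fE {a c : G} (g : a ⟶ c) : S.act.f g (S.e (Groupoid.inv g)) = S.e g := by
  have hmem : S.e (Groupoid.inv g) ∈ S.act.D (Groupoid.inv g) := eMem S _
  have hε : S.act.f g (S.e (Groupoid.inv g)) ∈ S.act.D g := fMem S g hmem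
  have hv : S.act.f (Groupoid.inv g) (S.e g) ∈ S.act.D (Groupoid.inv g) := by
    have := fMem S (Groupoid.inv g) (u := S.e g) (by rw [ginv_inv]; exact eMem S g)
    exact this
  have h1 : S.e g * S.act.f g (S.e (Groupoid.inv g)) = S.e g := by
    conv_lhs => rw [← fFInv S g (S.e g) (eMem S g)]
    rw [← S.act.map_mul g _ hv _ hmem, (memD S).1 hv, fFInv S g (S.e g) (eMem S g)]
  have h2 : S.act.f g (S.e (Groupoid.inv g)) * S.e g = S.act.f g (S.e (Groupoid.inv g)) :=
    (memD S).1 hε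
  calc S.act.f g (S.e (Groupoid.inv g))
      = S.act.f g (S.e (Groupoid.inv g)) * S.e g := h2.symm
    _ = S.e g * S.act.f g (S.e (Groupoid.inv g)) := (S.e_central g _).symm
    _ = S.e g := h1

end Helpers

/-- Characterization of the invariants of a lifted, `τ(x)`-global, `γ`-unital partial
action of a finite connected groupoid on `A = ⊕_y B_y`: an element `b` is `β`-invariant
iff its component `b_x = b·e_x` is invariant under the restricted partial action of the
isotropy group `G(x)` on `B_x` and `b_y = b·e_y = γ_{τ_y}(b_x)` for every object `y`. -/
theorem stmt13 {G : Type u} {A : Type v} [Groupoid G] [Ring A] [Fintype G]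
    [∀ a b : G, Fintype (a ⟶ b)] (x : G) (τ : ∀ y : G, x ⟶ y)
    (S : LiftedSetting G A x τ) (b : A) :
    (∀ (a c : G) (g : a ⟶ c), S.act.f g (b * S.e (Groupoid.inv g)) = b * S.e g) ↔
      ((∀ h : x ⟶ x,
          S.act.f h (b * S.e (𝟙 x) * S.e (Groupoid.inv h)) = b * S.e (𝟙 x) * S.e h) ∧
        ∀ y : G, b * S.e (𝟙 y) = S.act.f (τ y) (b * S.e (𝟙 x))) := by
  constructor
  · intro H
    refine ⟨fun h => ?_, fun y => ?_⟩
    · have key := H x x h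
      have h1 : b * S.e (𝟙 x) * S.e (Groupoid.inv h) = b * S.e (Groupoid.inv h) := by
        rw [mul_assoc, eAbsorb' S (Groupoid.inv h)]
      have h2 : b * S.e (𝟙 x) * S.e h = b * S.e h := by
        rw [mul_assoc, eAbsorb' S h]
      rw [h1, h2]; exact key
    · have key := H x y (τ y)
      have e1 : S.e (Groupoid.inv (τ y)) = S.e (𝟙 x) :=
        eEqOfDEq S _ _ (S.tau_global_inv y)
      have e2 : S.e (τ y) = S.e (𝟙 y) := eEqOfDEq S _ _ (S.tau_global y)
      rw [e1, e2] at key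
      exact key.symm
  · rintro ⟨H1, H2⟩ a c g
    have hu_mem : b * S.e (𝟙 x) ∈ S.act.D (𝟙 x) := mulEMem S _ b
    have huτ : ∀ y : G, b * S.e (𝟙 x) ∈ S.act.D (Groupoid.inv (τ y)) := fun y =>
      (S.tau_global_inv y).symm ▸ hu_mem
    have hdom : S.act.D (Groupoid.inv (Groupoid.inv (τ a))) = S.act.D (𝟙 a) := by
      rw [ginv_inv]; exact S.tau_global a
    have hbea : b * S.e (𝟙 a) ∈ S.act.D (Groupoid.inv (Groupoid.inv (τ a))) :=
      hdom.symm ▸ mulEMem S _ b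
    have heg' : S.e (Groupoid.inv g) ∈ S.act.D (Groupoid.inv (Groupoid.inv (τ a))) :=
      hdom.symm ▸ DSub S (Groupoid.inv g) (eMem S _)
    set ε := S.act.f (Groupoid.inv (τ a)) (S.e (Groupoid.inv g)) with hεdef
    have hfa : S.act.f (Groupoid.inv (τ a)) (b * S.e (𝟙 a)) = b * S.e (𝟙 x) := by
      rw [H2 a]; exact fInvF S (τ a) _ (huτ a)
    have hbeg : b * S.e (Groupoid.inv g) = b * S.e (𝟙 a) * S.e (Groupoid.inv g) := by
      rw [mul_assoc, eAbsorb' S (Groupoid.inv g)]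
    have stepA : S.act.f (Groupoid.inv (τ a)) (b * S.e (Groupoid.inv g)) =
        (b * S.e (𝟙 x)) * ε := by
      rw [hbeg, S.act.map_mul (Groupoid.inv (τ a)) _ hbea _ heg', hfa]
    have hε_mem : ε ∈ S.act.D (Groupoid.inv (τ a)) :=
      (S.act.bij (Groupoid.inv (τ a))).mapsTo heg'
    have hfτa_ε : S.act.f (τ a) ε = S.e (Groupoid.inv g) :=
      fFInv S (τ a) _ ((S.tau_global a).symm ▸ DSub S (Groupoid.inv g) (eMem S _))
    have c1 := S.act.comp (τ a) g ε hε_mem (by rw [hfτa_ε]; exact eMem S _)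
    have hfg : S.act.f (τ a ≫ g) ε = S.e g := by rw [c1.2, hfτa_ε, fE]
    have c2 := S.act.comp (τ a ≫ g) (Groupoid.inv (τ c)) ε c1.1
      (by rw [hfg, ginv_inv]; exact (S.tau_global c).symm ▸ DSub S g (eMem S g))
    have hε_h : ε ∈ S.act.D (Groupoid.inv (τ a ≫ g ≫ Groupoid.inv (τ c))) := by
      rw [← Category.assoc]; exact c2.1
    have hfh : S.act.f (τ a ≫ g ≫ Groupoid.inv (τ c)) ε =
        S.act.f (Groupoid.inv (τ c)) (S.e g) := by
      rw [← Category.assoc, c2.2, hfg]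
    set h := τ a ≫ g ≫ Groupoid.inv (τ c) with hhdef
    have huε : (b * S.e (𝟙 x)) * ε =
        (b * S.e (𝟙 x) * S.e (Groupoid.inv h)) * ε := by
      rw [mul_assoc (b * S.e (𝟙 x)), S.e_central, (memD S).1 hε_h]
    have hue_mem : b * S.e (𝟙 x) * S.e (Groupoid.inv h) ∈ S.act.D (Groupoid.inv h) :=
      mulEMem S _ _
    have hfhε_mem : S.act.f h ε ∈ S.act.D h := fMem S h hε_h
    have habs : S.e h * S.act.f h ε = S.act.f h ε := by
      rw [S.e_central]; exact (memD S).1 hfhε_mem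
    have stepB : S.act.f h ((b * S.e (𝟙 x)) * ε) =
        (b * S.e (𝟙 x)) * S.act.f h ε := by
      rw [huε, S.act.map_mul h _ hue_mem _ hε_h, H1 h, mul_assoc, habs]
    have mem1 : b * S.e (𝟙 x) ∈ S.act.D (Groupoid.inv (τ c)) := huτ c
    have mem2 : S.act.f (Groupoid.inv (τ c)) (S.e g) ∈ S.act.D (Groupoid.inv (τ c)) := by
      refine fMem S (Groupoid.inv (τ c)) ?_
      rw [ginv_inv]
      exact (S.tau_global c).symm ▸ DSub S g (eMem S g)
    have lifted_eq := S.lifted g (b * S.e (Groupoid.inv g)) (mulEMem S _ b)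
    rw [lifted_eq, stepA, ← hhdef, stepB, hfh,
      S.act.map_mul (τ c) _ mem1 _ mem2, ← H2 c,
      fFInv S (τ c) (S.e g) ((S.tau_global c).symm ▸ DSub S g (eMem S g)),
      mul_assoc, eAbsorb' S g]
end

section
/- In the setting of a finite connected groupoid G acting on A = ⊕_{y∈G₀} B_y via a lifted, τ(x)-global, γ-unital partial action β, for b_x ∈ B_x and b_z = γ_{τ_z}(b_x), the trace satisfies t_β(b_z) = Σ_{y ∈ G₀} γ_{τ_y}(t_{β_{(x)}}(b_x)), where t_β(a) = Σ_{g ∈ G} β_g(a·1_{g⁻¹}) and t_{β_{(x)}}(b) = Σ_{h ∈ G(x)} β_h(b·1_{h⁻¹}). -/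
open CategoryTheory

universe u v w

namespace LiftedSetting

variable {G : Type u} {A : Type v} [Groupoid G] [Ring A] [Fintype G]
    [∀ a b : G, Fintype (a ⟶ b)] {x : G} {τ : ∀ y : G, x ⟶ y}
    (S : LiftedSetting G A x τ)

lemma mem_D {a b : G} {g : a ⟶ b} {u : A} (h : u * S.e g = u) : u ∈ S.act.D g := by
  rw [S.D_eq]; exact h

lemma mem_D' {a b : G} {g : a ⟶ b} {u : A} (h : u ∈ S.act.D g) : u * S.e g = u := by
  rw [S.D_eq] at h; exact h

lemma e_mem {a b : G} (g : a ⟶ b) : S.e g ∈ S.act.D g := S.mem_D (S.e_idem g)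

lemma mul_e_mem {a b : G} (g : a ⟶ b) (u : A) : u * S.e g ∈ S.act.D g :=
  S.mem_D (by rw [mul_assoc, S.e_idem])

lemma D_subset {a b : G} (g : a ⟶ b) : S.act.D g ⊆ S.act.D (𝟙 b) := (S.act.ideal_mor g).1

lemma inv_inv' {a b : G} (g : a ⟶ b) : Groupoid.inv (Groupoid.inv g) = g := by
  simp [Groupoid.inv_eq_inv]

lemma f_mem {a b : G} (g : a ⟶ b) {u : A} (h : u ∈ S.act.D (Groupoid.inv g)) :
    S.act.f g u ∈ S.act.D g := (S.act.bij g).mapsTo h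

lemma f_zero {a b : G} (g : a ⟶ b) : S.act.f g 0 = 0 := by
  have h0 : (0 : A) ∈ S.act.D (Groupoid.inv g) := (S.act.ideal_mor _).2.1
  have h := S.act.map_add g 0 h0 0 h0
  rw [add_zero] at h
  have h2 : S.act.f g 0 + 0 = S.act.f g 0 + S.act.f g 0 := by rw [add_zero]; exact h
  exact (add_left_cancel h2).symm

lemma f_inv_f {a b : G} (g : a ⟶ b) {u : A} (h : u ∈ S.act.D (Groupoid.inv g)) :
    S.act.f (Groupoid.inv g) (S.act.f g u) = u := by
  have h2 : S.act.f g u ∈ S.act.D (Groupoid.inv (Groupoid.inv g)) := by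
    rw [LiftedSetting.inv_inv']; exact S.f_mem g h
  have hc := S.act.comp g (Groupoid.inv g) u h h2
  have hid : g ≫ Groupoid.inv g = 𝟙 a := Groupoid.comp_inv g
  rw [hid] at hc
  rw [← hc.2, S.act.id_act a u (S.D_subset _ h)]

lemma f_f_inv {a b : G} (g : a ⟶ b) {u : A} (h : u ∈ S.act.D g) :
    S.act.f g (S.act.f (Groupoid.inv g) u) = u := by
  have h' : u ∈ S.act.D (Groupoid.inv (Groupoid.inv g)) := by rw [LiftedSetting.inv_inv']; exact h
  have := S.f_inv_f (Groupoid.inv g) h'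
  rwa [LiftedSetting.inv_inv'] at this

lemma sum_mem_D {a b : G} (g : a ⟶ b) {ι : Type w} (s : Finset ι) (v : ι → A)
    (hv : ∀ i ∈ s, v i ∈ S.act.D g) : (∑ i ∈ s, v i) ∈ S.act.D g := by
  classical
  induction s using Finset.induction_on with
  | empty => simpa using (S.act.ideal_mor g).2.1
  | @insert j s hj ih =>
    rw [Finset.sum_insert hj]
    exact (S.act.ideal_mor g).2.2.1 _ (hv j (by simp)) _
      (ih fun i hi => hv i (by simp [hi]))

lemma f_sum {a b : G} (g : a ⟶ b) {ι : Type w} (s : Finset ι) (v : ι → A)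
    (hv : ∀ i ∈ s, v i ∈ S.act.D (Groupoid.inv g)) :
    S.act.f g (∑ i ∈ s, v i) = ∑ i ∈ s, S.act.f g (v i) := by
  classical
  induction s using Finset.induction_on with
  | empty => simpa using S.f_zero g
  | @insert j s hj ih =>
    rw [Finset.sum_insert hj, Finset.sum_insert hj,
      S.act.map_add g _ (hv j (by simp)) _
        (S.sum_mem_D (Groupoid.inv g) s v fun i hi => hv i (by simp [hi])),
      ih fun i hi => hv i (by simp [hi])]

/-- The key single-term identity. -/
lemma key (bx : A) (hbx : bx ∈ S.act.D (𝟙 x)) {zz b : G} (g : zz ⟶ b) :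
    S.act.f g (S.act.f (τ zz) bx * S.e (Groupoid.inv g)) =
      S.act.f (τ b) (S.act.f (τ zz ≫ g ≫ Groupoid.inv (τ b))
        (bx * S.e (Groupoid.inv (τ zz ≫ g ≫ Groupoid.inv (τ b))))) := by
  set h : x ⟶ x := τ zz ≫ g ≫ Groupoid.inv (τ b) with hh
  set eg : A := S.e (Groupoid.inv g) with heg
  set eh : A := S.e (Groupoid.inv h) with heh
  set bz : A := S.act.f (τ zz) bx with hbz
  -- basic memberships
  have hbxdom : bx ∈ S.act.D (Groupoid.inv (τ zz)) := by
    rw [S.tau_global_inv]; exact hbx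
  have hbzD : bz ∈ S.act.D (𝟙 zz) := by
    have := S.f_mem (τ zz) hbxdom
    rwa [S.tau_global] at this
  have heg_mem : eg ∈ S.act.D (Groupoid.inv g) := S.e_mem _
  have heg_zz : eg ∈ S.act.D (𝟙 zz) := S.D_subset _ heg_mem
  have heh_mem : eh ∈ S.act.D (Groupoid.inv h) := S.e_mem _
  have heh_x : eh ∈ S.act.D (𝟙 x) := S.D_subset _ heh_mem
  have hw : bz * eg ∈ S.act.D (Groupoid.inv g) := S.mul_e_mem _ _
  have hv_inv_h : bx * eh ∈ S.act.D (Groupoid.inv h) := S.mul_e_mem _ _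
  have hv_x : bx * eh ∈ S.act.D (𝟙 x) := S.D_subset _ hv_inv_h
  -- (1) c := f (inv τ zz) eg ∈ D (inv h)
  have heg_tz : eg ∈ S.act.D (Groupoid.inv (Groupoid.inv (τ zz))) := by
    rw [LiftedSetting.inv_inv', S.tau_global]; exact heg_zz
  set c : A := S.act.f (Groupoid.inv (τ zz)) eg with hc
  have hc_dom : c ∈ S.act.D (Groupoid.inv (τ zz)) := S.f_mem _ heg_tz
  have h_eg1 : eg ∈ S.act.D (Groupoid.inv (g ≫ Groupoid.inv (τ b))) := by
    refine (S.act.comp g (Groupoid.inv (τ b)) eg heg_mem ?_).1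
    rw [LiftedSetting.inv_inv', S.tau_global]
    exact S.D_subset _ (S.f_mem g heg_mem)
  have hfc : S.act.f (τ zz) c = eg := S.f_f_inv (τ zz) (by rw [S.tau_global]; exact heg_zz)
  have hc_mem : c ∈ S.act.D (Groupoid.inv h) := by
    refine (S.act.comp (τ zz) (g ≫ Groupoid.inv (τ b)) c ?_ ?_).1
    · exact hc_dom
    · rw [hfc]; exact h_eg1
  -- (2) d := f (τ zz) eh ∈ D (inv g)
  set d : A := S.act.f (τ zz) eh with hd
  have heh_tzinv : eh ∈ S.act.D (Groupoid.inv (τ zz)) := by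
    rw [S.tau_global_inv]; exact heh_x
  have hd_tz : d ∈ S.act.D (τ zz) := S.f_mem _ heh_tzinv
  have h_eh1 : eh ∈ S.act.D (Groupoid.inv (h ≫ τ b)) := by
    refine (S.act.comp h (τ b) eh heh_mem ?_).1
    rw [S.tau_global_inv]
    exact S.D_subset _ (S.f_mem h heh_mem)
  have hfd : S.act.f (Groupoid.inv (τ zz)) d = eh := S.f_inv_f (τ zz) heh_tzinv
  have hg_decomp : Groupoid.inv (τ zz) ≫ h ≫ τ b = g := by
    rw [hh]; simp [Groupoid.inv_eq_inv]
  have hd_mem : d ∈ S.act.D (Groupoid.inv g) := by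
    have := (S.act.comp (Groupoid.inv (τ zz)) (h ≫ τ b) d
      (by rw [LiftedSetting.inv_inv']; exact hd_tz) (by rw [hfd]; exact h_eh1)).1
    rwa [hg_decomp] at this
  -- (3) d = eg
  have hc_x : c ∈ S.act.D (Groupoid.inv (τ zz)) := hc_dom
  have hdeg_eq : d * eg = eg := by
    have hcd : c * eh = c := S.mem_D' hc_mem
    have : d * eg = S.act.f (τ zz) (eh * c) := by
      rw [← hfc, ← S.act.map_mul (τ zz) eh heh_tzinv c hc_x]
    rw [this, S.e_central, hcd, hfc]
  have hd_eq : d = eg := by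
    have h1 : d * eg = d := S.mem_D' hd_mem
    rw [← h1, hdeg_eq]
  -- (4) f (τ zz) (bx * eh) = bz * eg
  have h4 : S.act.f (τ zz) (bx * eh) = bz * eg := by
    rw [S.act.map_mul (τ zz) bx hbxdom eh heh_tzinv, ← hbz, ← hd, hd_eq]
  -- (5) chain of equalities
  have hv_tzinv : bx * eh ∈ S.act.D (Groupoid.inv (τ zz)) := by
    rw [S.tau_global_inv]; exact hv_x
  have step1 := S.act.comp h (τ b) (bx * eh) hv_inv_h
    (by rw [S.tau_global_inv]; exact S.D_subset _ (S.f_mem h hv_inv_h))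
  have hcomp2 : h ≫ τ b = τ zz ≫ g := by rw [hh]; simp
  have step2 := S.act.comp (τ zz) g (bx * eh) hv_tzinv (by rw [h4]; exact hw)
  calc S.act.f g (bz * eg) = S.act.f g (S.act.f (τ zz) (bx * eh)) := by rw [h4]
    _ = S.act.f (τ zz ≫ g) (bx * eh) := (step2.2).symm
    _ = S.act.f (h ≫ τ b) (bx * eh) := by rw [hcomp2]
    _ = S.act.f (τ b) (S.act.f h (bx * eh)) := step1.2

/-- Terms with source `≠ z` vanish. -/
lemma vanish (bx : A) (hbx : bx ∈ S.act.D (𝟙 x)) {zz a b : G} (hne : a ≠ zz) (g : a ⟶ b) :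
    S.act.f g (S.act.f (τ zz) bx * S.e (Groupoid.inv g)) = 0 := by
  have hbzD : S.act.f (τ zz) bx ∈ S.act.D (𝟙 zz) := by
    have hbxdom : bx ∈ S.act.D (Groupoid.inv (τ zz)) := by rw [S.tau_global_inv]; exact hbx
    have := S.f_mem (τ zz) hbxdom
    rwa [S.tau_global] at this
  set bz : A := S.act.f (τ zz) bx
  have hbz1 : bz * S.e (𝟙 zz) = bz := S.mem_D' hbzD
  have heg : S.e (Groupoid.inv g) * S.e (𝟙 a) = S.e (Groupoid.inv g) :=
    S.mem_D' (S.D_subset (Groupoid.inv g) (S.e_mem (Groupoid.inv g)))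
  have hzero : bz * S.e (Groupoid.inv g) = 0 := by
    have : bz * S.e (Groupoid.inv g) =
        bz * (S.e (Groupoid.inv g) * (S.e (𝟙 zz) * S.e (𝟙 a))) := by
      rw [← mul_assoc (S.e (Groupoid.inv g)), S.e_central (Groupoid.inv g) (S.e (𝟙 zz)),
        mul_assoc (S.e (𝟙 zz)), heg, ← mul_assoc, hbz1]
    rw [this, S.orth zz a (fun hEq => hne hEq.symm), mul_zero, mul_zero]
  rw [hzero, S.f_zero]

/-- The conjugation bijection `(zz ⟶ b) ≃ (x ⟶ x)`. -/
def conjEquiv (zz b : G) : (zz ⟶ b) ≃ (x ⟶ x) where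
  toFun g := τ zz ≫ g ≫ Groupoid.inv (τ b)
  invFun h := Groupoid.inv (τ zz) ≫ h ≫ τ b
  left_inv g := by simp [Groupoid.inv_eq_inv]
  right_inv h := by simp [Groupoid.inv_eq_inv]

end LiftedSetting

/-- For `b_x ∈ B_x` and `b_z = γ_{τ_z}(b_x)`, the trace of the lifted partial action
satisfies `t_β (b_z) = ∑_{y ∈ G₀} γ_{τ_y} (t_{β_{(x)}} (b_x))`. -/
theorem stmt14 {G : Type u} {A : Type v} [Groupoid G] [Ring A] [Fintype G]
    [∀ a b : G, Fintype (a ⟶ b)] (x : G) (τ : ∀ y : G, x ⟶ y)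
    (S : LiftedSetting G A x τ) (bx : A) (hbx : bx ∈ S.act.D (𝟙 x)) (z : G) :
    (∑ p : Σ a : G, Σ b : G, a ⟶ b,
        S.act.f p.2.2 (S.act.f (τ z) bx * S.e (Groupoid.inv p.2.2))) =
      ∑ y : G, S.act.f (τ y)
        (∑ h : x ⟶ x, S.act.f h (bx * S.e (Groupoid.inv h))) := by
  classical
  have hsig : (∑ p : Σ a : G, Σ b : G, a ⟶ b,
      S.act.f p.2.2 (S.act.f (τ z) bx * S.e (Groupoid.inv p.2.2))) =
      ∑ a : G, ∑ b : G, ∑ g : a ⟶ b,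
        S.act.f g (S.act.f (τ z) bx * S.e (Groupoid.inv g)) := by
    rw [← Finset.univ_sigma_univ, Finset.sum_sigma]
    refine Finset.sum_congr rfl fun a _ => ?_
    rw [← Finset.univ_sigma_univ, Finset.sum_sigma]
  rw [hsig]
  rw [Fintype.sum_eq_single z (fun a ha => ?_)]
  · -- main term at a = z
    have hrhs : ∀ y : G,
        S.act.f (τ y) (∑ h : x ⟶ x, S.act.f h (bx * S.e (Groupoid.inv h))) =
        ∑ h : x ⟶ x, S.act.f (τ y) (S.act.f h (bx * S.e (Groupoid.inv h))) := by
      intro y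
      refine S.f_sum (τ y) Finset.univ _ fun h _ => ?_
      rw [S.tau_global_inv]
      exact S.D_subset h (S.f_mem h (S.mul_e_mem _ _))
    refine Finset.sum_congr rfl fun b _ => ?_
    rw [hrhs b]
    refine Fintype.sum_equiv (LiftedSetting.conjEquiv (τ := τ) z b) _ _ fun g => ?_
    exact S.key bx hbx g
  · -- vanishing terms
    refine Finset.sum_eq_zero fun b _ => Finset.sum_eq_zero fun g _ => ?_
    exact S.vanish bx hbx ha g
end

section
/- Let β be a unital partial action of a finite groupoid G on a ring A, with each B_g = A·1_g for a central idempotent 1_g and A = ⊕_{y∈G₀}B_y. The partial skew groupoid ring A ⋆_β G = ⊕_{g∈G} B_g δ_g with multiplication (aδ_g)(bδ_h) = a β_g(b·1_{g⁻¹}) δ_{gh} when s(g) = t(h) and 0 otherwise, is an associative unital ring with identity Σ_{y∈G₀} 1_y δ_y. -/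
open CategoryTheory

universe u v w

/-- A unital partial action of a finite groupoid `G` on `A`: each `D g = A·(e g)` for a
central idempotent `e g`, the idempotents `e (𝟙 y)` are orthogonal with sum `1`
(so `A = ⊕_{y ∈ G₀} B_y`). -/
structure UnitalPGA (G : Type u) (A : Type v) [Groupoid G] [Ring A] [Fintype G]
    [∀ a b : G, Fintype (a ⟶ b)] where
  act : PartialGroupoidAction G A
  e : ∀ {a b : G}, (a ⟶ b) → A
  e_central : ∀ {a b : G} (g : a ⟶ b) (r : A), e g * r = r * e g
  e_idem : ∀ {a b : G} (g : a ⟶ b), e g * e g = e g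
  D_eq : ∀ {a b : G} (g : a ⟶ b), act.D g = {u : A | u * e g = u}
  orth : ∀ y z : G, y ≠ z → e (𝟙 y) * e (𝟙 z) = 0
  sum_id_one : (∑ y : G, e (𝟙 y)) = 1

/-- The set of all morphisms of the groupoid `G`, as a sigma type. -/
abbrev Mor (G : Type u) [Groupoid G] : Type u := Σ a : G, Σ b : G, a ⟶ b

/-- The multiplication of the partial skew groupoid ring `A ⋆ G = ⊕_g (A·e g) δ_g`:
`(a δ_g)(b δ_h) = a · f g (b · e (inv g)) δ_{h ≫ g}` when composable, `0` otherwise. -/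
def skewMul {G : Type u} {A : Type v} [Groupoid G] [Ring A] [Fintype G]
    [∀ a b : G, Fintype (a ⟶ b)] (act : PartialGroupoidAction G A)
    (e : ∀ a b : G, (a ⟶ b) → A) (u v : Mor G → A) : Mor G → A :=
  fun p => ∑ c : G, ∑ h : p.1 ⟶ c,
    u ⟨c, p.2.1, Groupoid.inv h ≫ p.2.2⟩ *
      act.f (Groupoid.inv h ≫ p.2.2)
        (v ⟨p.1, c, h⟩ * e p.2.1 c (Groupoid.inv (Groupoid.inv h ≫ p.2.2)))

/-- The candidate identity `∑_{y ∈ G₀} (e (𝟙 y)) δ_y` of the partial skew groupoid ring. -/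
def skewOne {G : Type u} {A : Type v} [Groupoid G] [Ring A] [DecidableEq G]
    [∀ a b : G, DecidableEq (a ⟶ b)] (e : ∀ a b : G, (a ⟶ b) → A) : Mor G → A :=
  fun p => if hp : p.1 = p.2.1 then (if p.2.2 = eqToHom hp then e p.1 p.1 (𝟙 p.1) else 0) else 0

/-- The carrier `⊕_g B_g δ_g` of the partial skew groupoid ring: functions supported
with `u p` in the ideal `D p`. -/
def skewSupp {G : Type u} {A : Type v} [Groupoid G] [Ring A]
    (act : PartialGroupoidAction G A) : Set (Mor G → A) :=
  {u : Mor G → A | ∀ p : Mor G, u p ∈ act.D p.2.2}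

namespace UnitalPGA

variable {G : Type u} {A : Type v} [Groupoid G] [Ring A] [Fintype G]
    [∀ a b : G, Fintype (a ⟶ b)] (S : UnitalPGA G A)

lemma mem_D_iff {a b : G} (g : a ⟶ b) {x : A} : x ∈ S.act.D g ↔ x * S.e g = x := by
  rw [S.D_eq]; exact Iff.rfl

lemma mul_e_of_mem {a b : G} (g : a ⟶ b) {x : A} (hx : x ∈ S.act.D g) : x * S.e g = x :=
  (S.mem_D_iff g).1 hx

lemma mul_e_mem {a b : G} (g : a ⟶ b) (x : A) : x * S.e g ∈ S.act.D g := by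
  rw [mem_D_iff, mul_assoc, S.e_idem]

lemma e_mem {a b : G} (g : a ⟶ b) : S.e g ∈ S.act.D g := by
  rw [mem_D_iff]; exact S.e_idem g

lemma zero_mem {a b : G} (g : a ⟶ b) : (0 : A) ∈ S.act.D g := by
  rw [mem_D_iff, zero_mul]

lemma mem_D_id {a b : G} (g : a ⟶ b) {x : A} (hx : x ∈ S.act.D g) : x ∈ S.act.D (𝟙 b) :=
  (S.act.ideal_mor g).1 hx

lemma f_mem {a b : G} (g : a ⟶ b) {x : A} (hx : x ∈ S.act.D (Groupoid.inv g)) :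
    S.act.f g x ∈ S.act.D g := (S.act.bij g).1 hx

lemma f_zero {a b : G} (g : a ⟶ b) : S.act.f g 0 = 0 := by
  have h := S.act.map_add g 0 (S.zero_mem _) 0 (S.zero_mem _)
  rw [add_zero] at h
  exact add_eq_right.mp h.symm

/-- `f g ∘ f (inv g) = id` on `D g`. -/
lemma f_f_inv {a b : G} (g : a ⟶ b) {x : A} (hx : x ∈ S.act.D g) :
    S.act.f g (S.act.f (Groupoid.inv g) x) = x := by
  have e1 : Groupoid.inv (Groupoid.inv g) = g := by simp
  have hx' : x ∈ S.act.D (Groupoid.inv (Groupoid.inv g)) := by rw [e1]; exact hx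
  have h2 : S.act.f (Groupoid.inv g) x ∈ S.act.D (Groupoid.inv g) := S.f_mem _ hx'
  have hc := S.act.comp (Groupoid.inv g) g x hx' h2
  rw [show Groupoid.inv g ≫ g = 𝟙 b from Groupoid.inv_comp g] at hc
  rw [← hc.2, S.act.id_act b x (S.mem_D_id g hx)]

/-- `f (inv g) ∘ f g = id` on `D (inv g)`. -/
lemma f_inv_f {a b : G} (g : a ⟶ b) {x : A} (hx : x ∈ S.act.D (Groupoid.inv g)) :
    S.act.f (Groupoid.inv g) (S.act.f g x) = x := by
  have e1 : Groupoid.inv (Groupoid.inv g) = g := by simp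
  have h2 : S.act.f g x ∈ S.act.D (Groupoid.inv (Groupoid.inv g)) := by
    rw [e1]; exact S.f_mem _ hx
  have hc := S.act.comp g (Groupoid.inv g) x hx h2
  rw [show g ≫ Groupoid.inv g = 𝟙 a from Groupoid.comp_inv g] at hc
  rw [← hc.2, S.act.id_act a x (S.mem_D_id (Groupoid.inv g) hx)]

lemma f_e_inv {a b : G} (g : a ⟶ b) : S.act.f g (S.e (Groupoid.inv g)) = S.e g := by
  have hE : S.act.f g (S.e (Groupoid.inv g)) ∈ S.act.D g := S.f_mem _ (S.e_mem _)
  have hy : S.act.f (Groupoid.inv g) (S.e g) ∈ S.act.D (Groupoid.inv g) := by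
    have e1 : Groupoid.inv (Groupoid.inv g) = g := by simp
    have := S.f_mem (Groupoid.inv g) (x := S.e g) (by rw [e1]; exact S.e_mem g)
    exact this
  have key : S.act.f g (S.e (Groupoid.inv g)) * S.e g = S.act.f g (S.e (Groupoid.inv g)) :=
    S.mul_e_of_mem g hE
  have key2 : S.act.f g (S.e (Groupoid.inv g)) * S.e g = S.e g := by
    conv_lhs => rw [← S.f_f_inv g (S.e_mem g)]
    rw [← S.act.map_mul g _ (S.e_mem _) _ hy]
    rw [S.e_central, S.mul_e_of_mem _ hy, S.f_f_inv g (S.e_mem g)]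
  rw [← key, key2]

end UnitalPGA
namespace UnitalPGA

variable {G : Type u} {A : Type v} [Groupoid G] [Ring A] [Fintype G]
    [∀ a b : G, Fintype (a ⟶ b)] (S : UnitalPGA G A)

lemma mul_e_mem' {a b a' b' : G} (g : a ⟶ b) (h : a' ⟶ b') {x : A} (hx : x ∈ S.act.D g) :
    x * S.e h ∈ S.act.D g := by
  rw [mem_D_iff, mul_assoc, S.e_central h (S.e g), ← mul_assoc, S.mul_e_of_mem g hx]

/-- If `z ∈ D (inv g) ∩ D h`, then `f g z ∈ D (h ≫ g)`. -/
lemma f_mem_comp {a c b : G} (h : a ⟶ c) (g : c ⟶ b) {z : A}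
    (hz1 : z ∈ S.act.D (Groupoid.inv g)) (hz2 : z ∈ S.act.D h) :
    S.act.f g z ∈ S.act.D (h ≫ g) := by
  have e1 : Groupoid.inv (Groupoid.inv h) = h := by simp
  have hv : S.act.f (Groupoid.inv h) z ∈ S.act.D (Groupoid.inv h) :=
    S.f_mem (Groupoid.inv h) (by rw [e1]; exact hz2)
  have hfv : S.act.f h (S.act.f (Groupoid.inv h) z) = z := S.f_f_inv h hz2
  have hc := S.act.comp h g (S.act.f (Groupoid.inv h) z) hv (by rw [hfv]; exact hz1)
  have := S.f_mem (h ≫ g) hc.1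
  rw [hc.2, hfv] at this
  exact this

/-- If `x ∈ D g ∩ D (h ≫ g)`, then `f (inv g) x ∈ D h`. -/
lemma f_inv_mem {a c b : G} (h : a ⟶ c) (g : c ⟶ b) {x : A}
    (hx1 : x ∈ S.act.D g) (hx2 : x ∈ S.act.D (h ≫ g)) :
    S.act.f (Groupoid.inv g) x ∈ S.act.D h := by
  have e2 : Groupoid.inv (Groupoid.inv (h ≫ g)) = h ≫ g := by simp
  have hy : S.act.f (Groupoid.inv (h ≫ g)) x ∈ S.act.D (Groupoid.inv (h ≫ g)) :=
    S.f_mem _ (by rw [e2]; exact hx2)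
  have hfy : S.act.f (h ≫ g) (S.act.f (Groupoid.inv (h ≫ g)) x) = x := S.f_f_inv _ hx2
  have e3 : Groupoid.inv (Groupoid.inv g) = g := by simp
  have hc := S.act.comp (h ≫ g) (Groupoid.inv g) (S.act.f (Groupoid.inv (h ≫ g)) x) hy
    (by rw [hfy, e3]; exact hx1)
  rw [show (h ≫ g) ≫ Groupoid.inv g = h by simp] at hc
  have hm := S.f_mem h hc.1
  rw [hc.2, hfy] at hm
  exact hm

/-- `f g (e (inv g) * e h) = e g * e (h ≫ g)`. -/
lemma f_e_mul_e {a c b : G} (h : a ⟶ c) (g : c ⟶ b) :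
    S.act.f g (S.e (Groupoid.inv g) * S.e h) = S.e g * S.e (h ≫ g) := by
  set w : A := S.e (Groupoid.inv g) * S.e h with hw
  have hw1 : w ∈ S.act.D (Groupoid.inv g) := S.mul_e_mem' _ h (S.e_mem _)
  have hw2 : w ∈ S.act.D h := S.mul_e_mem h _
  set t : A := S.e g * S.e (h ≫ g) with htdef
  have ht1 : t ∈ S.act.D g := S.mul_e_mem' g (h ≫ g) (S.e_mem g)
  have ht2 : t ∈ S.act.D (h ≫ g) := S.mul_e_mem (h ≫ g) _
  have hfw1 : S.act.f g w ∈ S.act.D g := S.f_mem g hw1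
  have hfw2 : S.act.f g w ∈ S.act.D (h ≫ g) := S.f_mem_comp h g hw1 hw2
  have e3 : Groupoid.inv (Groupoid.inv g) = g := by simp
  set z : A := S.act.f (Groupoid.inv g) t with hzdef
  have hz1 : z ∈ S.act.D (Groupoid.inv g) := S.f_mem _ (by rw [e3]; exact ht1)
  have hz2 : z ∈ S.act.D h := S.f_inv_mem h g ht1 ht2
  have hft : S.act.f g z = t := S.f_f_inv g ht1
  have hzw : z * w = z := by
    rw [hw, ← mul_assoc, S.mul_e_of_mem _ hz1, S.mul_e_of_mem _ hz2]
  have key1 : t * S.act.f g w = t := by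
    rw [← hft, ← S.act.map_mul g _ hz1 _ hw1, hzw, hft]
  have key2 : S.act.f g w * t = S.act.f g w := by
    rw [htdef, ← mul_assoc, S.mul_e_of_mem g hfw1, S.mul_e_of_mem _ hfw2]
  have comm : t * S.act.f g w = S.act.f g w * t := by
    rw [htdef, mul_assoc, S.e_central (h ≫ g), ← mul_assoc, S.e_central g, mul_assoc]
  rw [← key2, ← comm, key1]

/-- `F g x = f g (x · e (inv g))`, i.e. `β_g(x 1_{g⁻¹})`. -/
def F {a b : G} (g : a ⟶ b) (x : A) : A := S.act.f g (x * S.e (Groupoid.inv g))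

lemma F_mem {a b : G} (g : a ⟶ b) (x : A) : S.F g x ∈ S.act.D g :=
  S.f_mem g (S.mul_e_mem _ x)

lemma F_add {a b : G} (g : a ⟶ b) (x y : A) : S.F g (x + y) = S.F g x + S.F g y := by
  rw [F, F, F, add_mul, S.act.map_add g _ (S.mul_e_mem _ x) _ (S.mul_e_mem _ y)]

lemma F_zero {a b : G} (g : a ⟶ b) : S.F g 0 = 0 := by
  rw [F, zero_mul, S.f_zero]

lemma F_mul {a b : G} (g : a ⟶ b) (x y : A) : S.F g (x * y) = S.F g x * S.F g y := by
  have key : x * y * S.e (Groupoid.inv g) = (x * S.e (Groupoid.inv g)) * (y * S.e (Groupoid.inv g)) := by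
    rw [mul_assoc x (S.e (Groupoid.inv g)), S.e_central (Groupoid.inv g),
      mul_assoc y, S.e_idem, ← mul_assoc]
  rw [F, F, F, key, S.act.map_mul g _ (S.mul_e_mem _ x) _ (S.mul_e_mem _ y)]

lemma F_of_mem {a b : G} (g : a ⟶ b) {x : A} (hx : x ∈ S.act.D (Groupoid.inv g)) :
    S.F g x = S.act.f g x := by rw [F, S.mul_e_of_mem _ hx]

lemma F_sum {a b : G} (g : a ⟶ b) {ι : Type w} (s : Finset ι) (t : ι → A) :
    S.F g (∑ i ∈ s, t i) = ∑ i ∈ s, S.F g (t i) := by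
  classical
  induction s using Finset.induction with
  | empty => simp [F_zero]
  | insert _ _ hns ih => rw [Finset.sum_insert hns, F_add, ih, Finset.sum_insert hns]

/-- Key lemma: `F g (F h x) = F (h ≫ g) (x * e (inv h))`. -/
lemma F_F {a c b : G} (h : a ⟶ c) (g : c ⟶ b) (x : A) :
    S.F g (S.F h x) = S.F (h ≫ g) (x * S.e (Groupoid.inv h)) := by
  have E1 := S.f_e_mul_e (Groupoid.inv (h ≫ g)) h
  rw [show Groupoid.inv (h ≫ g) ≫ h = Groupoid.inv g by simp] at E1
  -- E1 : f h (e (inv h) * e (inv (h ≫ g))) = e h * e (inv g)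
  set u : A := x * S.e (Groupoid.inv h) * S.e (Groupoid.inv (h ≫ g)) with hudef
  have hu1 : u ∈ S.act.D (Groupoid.inv h) := S.mul_e_mem' _ _ (S.mul_e_mem _ x)
  have hu2 : u ∈ S.act.D (Groupoid.inv (h ≫ g)) := S.mul_e_mem _ _
  have step : S.F h x * S.e (Groupoid.inv g) = S.act.f h u := by
    have hX : S.F h x * S.e h = S.F h x := S.mul_e_of_mem h (S.F_mem h x)
    calc S.F h x * S.e (Groupoid.inv g)
        = S.F h x * (S.e h * S.e (Groupoid.inv g)) := by rw [← mul_assoc, hX]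
      _ = S.act.f h (x * S.e (Groupoid.inv h)) *
            S.act.f h (S.e (Groupoid.inv h) * S.e (Groupoid.inv (h ≫ g))) := by
          rw [← E1]; rfl
      _ = S.act.f h ((x * S.e (Groupoid.inv h)) *
            (S.e (Groupoid.inv h) * S.e (Groupoid.inv (h ≫ g)))) := by
          rw [S.act.map_mul h _ (S.mul_e_mem _ x) _ (S.mul_e_mem' _ _ (S.e_mem _))]
      _ = S.act.f h u := by
          rw [hudef, ← mul_assoc, mul_assoc x, S.e_idem]
  have hfu : S.act.f h u ∈ S.act.D (Groupoid.inv g) := by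
    rw [← step]; exact S.mul_e_mem _ _
  have hc := S.act.comp h g u hu1 hfu
  have lhs : S.F g (S.F h x) = S.act.f g (S.act.f h u) := by
    rw [F, step]
  rw [lhs, ← hc.2, hudef]
  rfl

/-- Key lemma: `F g (x * F m y) = F g x * F (m ≫ g) y` for `x ∈ D m`. -/
lemma F_mul_F {c d b : G} (m : c ⟶ d) (g : d ⟶ b) (x y : A) (hx : x ∈ S.act.D m) :
    S.F g (x * S.F m y) = S.F g x * S.F (m ≫ g) y := by
  have e1 : Groupoid.inv (Groupoid.inv m) = m := by simp
  set x' : A := S.act.f (Groupoid.inv m) x with hx'def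
  have hx' : x' ∈ S.act.D (Groupoid.inv m) := S.f_mem _ (by rw [e1]; exact hx)
  have hfx' : S.act.f m x' = x := S.f_f_inv m hx
  have h1 : x * S.F m y = S.F m (x' * y) := by
    rw [F, F, ← hfx',
      ← S.act.map_mul m _ hx' _ (S.mul_e_mem _ y), mul_assoc]
  have hxy : (x' * y) * S.e (Groupoid.inv m) = x' * y := by
    rw [mul_assoc, ← S.e_central (Groupoid.inv m) y, ← mul_assoc, S.mul_e_of_mem _ hx']
  have h3 : S.F g x = S.F (m ≫ g) x' := by
    have hFmx' : S.F m x' = x := by rw [S.F_of_mem m hx', hfx']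
    rw [← hFmx', F_F, S.mul_e_of_mem _ hx']
  rw [h1, F_F, hxy, F_mul, h3]

end UnitalPGA
namespace UnitalPGA

variable {G : Type u} {A : Type v} [Groupoid G] [Ring A] [Fintype G]
    [∀ a b : G, Fintype (a ⟶ b)] (S : UnitalPGA G A)

lemma skewMul_apply (u v : Mor G → A) {a b : G} (k : a ⟶ b) :
    skewMul S.act (fun a b g => S.e g) u v ⟨a, b, k⟩ =
      ∑ c : G, ∑ h : a ⟶ c, u ⟨c, b, Groupoid.inv h ≫ k⟩ *
        S.F (Groupoid.inv h ≫ k) (v ⟨a, c, h⟩) := rfl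

lemma F_comp_mem {a c b : G} (h : a ⟶ c) (k : a ⟶ b) {x : A} (hx : x ∈ S.act.D h) :
    S.F (Groupoid.inv h ≫ k) x ∈ S.act.D k := by
  have hz1 : x * S.e (Groupoid.inv (Groupoid.inv h ≫ k)) ∈
      S.act.D (Groupoid.inv (Groupoid.inv h ≫ k)) := S.mul_e_mem _ _
  have hz2 : x * S.e (Groupoid.inv (Groupoid.inv h ≫ k)) ∈ S.act.D h :=
    S.mul_e_mem' _ _ hx
  have key := S.f_mem_comp h (Groupoid.inv h ≫ k) hz1 hz2
  rw [show h ≫ Groupoid.inv h ≫ k = k by simp] at key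
  exact key

lemma skewMul_mem (u v : Mor G → A) (hu : u ∈ skewSupp S.act) (hv : v ∈ skewSupp S.act) :
    skewMul S.act (fun a b g => S.e g) u v ∈ skewSupp S.act := by
  rintro ⟨a, b, k⟩
  rw [S.mem_D_iff, skewMul_apply, Finset.sum_mul]
  refine Finset.sum_congr rfl fun c _ => ?_
  rw [Finset.sum_mul]
  refine Finset.sum_congr rfl fun h _ => ?_
  rw [mul_assoc, S.mul_e_of_mem k (S.F_comp_mem h k (hv ⟨a, c, h⟩))]

lemma skewOne_mem [DecidableEq G] [∀ a b : G, DecidableEq (a ⟶ b)] :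
    skewOne (fun a b g => S.e g) ∈ skewSupp S.act := by
  rintro ⟨a, b, k⟩
  show (if hp : a = b then (if k = eqToHom hp then S.e (𝟙 a) else 0) else 0) ∈ S.act.D k
  split_ifs with h1 h2
  · subst h1; subst h2; simpa using S.e_mem (𝟙 a)
  · exact S.zero_mem k
  · exact S.zero_mem k

lemma skewMul_add_right (u v w : Mor G → A) :
    skewMul S.act (fun a b g => S.e g) u (v + w) =
      skewMul S.act (fun a b g => S.e g) u v + skewMul S.act (fun a b g => S.e g) u w := by
  funext p; obtain ⟨a, b, k⟩ := p
  simp only [Pi.add_apply, skewMul_apply, ← Finset.sum_add_distrib]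
  refine Finset.sum_congr rfl fun c _ => Finset.sum_congr rfl fun h _ => ?_
  rw [S.F_add, mul_add]

lemma skewMul_add_left (u v w : Mor G → A) :
    skewMul S.act (fun a b g => S.e g) (u + v) w =
      skewMul S.act (fun a b g => S.e g) u w + skewMul S.act (fun a b g => S.e g) v w := by
  funext p; obtain ⟨a, b, k⟩ := p
  simp only [Pi.add_apply, skewMul_apply, ← Finset.sum_add_distrib]
  refine Finset.sum_congr rfl fun c _ => Finset.sum_congr rfl fun h _ => ?_
  rw [add_mul]

lemma F_id {b : G} (x : A) : S.F (𝟙 b) x = x * S.e (𝟙 b) := by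
  have e1 : Groupoid.inv (𝟙 b) = 𝟙 b := by simp
  rw [F, e1, S.act.id_act b _ (S.mul_e_mem _ x)]

lemma skewOne_mul [DecidableEq G] [∀ a b : G, DecidableEq (a ⟶ b)]
    (u : Mor G → A) (hu : u ∈ skewSupp S.act) :
    skewMul S.act (fun a b g => S.e g) (skewOne (fun a b g => S.e g)) u = u := by
  funext p; obtain ⟨a, b, k⟩ := p
  rw [skewMul_apply]
  rw [Finset.sum_eq_single_of_mem b (Finset.mem_univ b) ?side1]
  · rw [Finset.sum_eq_single_of_mem k (Finset.mem_univ k) ?side2]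
    · have h1 : skewOne (fun a b g => S.e g) ⟨b, b, Groupoid.inv k ≫ k⟩ = S.e (𝟙 b) := by
        show (if hp : b = b then (if Groupoid.inv k ≫ k = eqToHom hp then S.e (𝟙 b) else 0)
          else 0) = _
        rw [dif_pos rfl, if_pos (by simp)]
      rw [h1, show Groupoid.inv k ≫ k = 𝟙 b by simp, F_id,
        S.mul_e_of_mem _ (S.mem_D_id k (hu ⟨a, b, k⟩)), S.e_central,
        S.mul_e_of_mem _ (S.mem_D_id k (hu ⟨a, b, k⟩))]
    · intro h _ hne
      have h0 : skewOne (fun a b g => S.e g) ⟨b, b, Groupoid.inv h ≫ k⟩ = 0 := by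
        show (if hp : b = b then (if Groupoid.inv h ≫ k = eqToHom hp then S.e (𝟙 b) else 0)
          else 0) = _
        rw [dif_pos rfl, if_neg]
        intro hcon
        apply hne
        have : h ≫ Groupoid.inv h ≫ k = h ≫ eqToHom rfl := by rw [hcon]
        simpa using this.symm
      rw [h0, zero_mul]
  · intro c _ hc
    apply Finset.sum_eq_zero
    intro h _
    have h0 : skewOne (fun a b g => S.e g) ⟨c, b, Groupoid.inv h ≫ k⟩ = 0 := by
      show (if hp : c = b then _ else (0 : A)) = 0
      rw [dif_neg hc]
    rw [h0, zero_mul]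

lemma mul_skewOne [DecidableEq G] [∀ a b : G, DecidableEq (a ⟶ b)]
    (u : Mor G → A) (hu : u ∈ skewSupp S.act) :
    skewMul S.act (fun a b g => S.e g) u (skewOne (fun a b g => S.e g)) = u := by
  funext p; obtain ⟨a, b, k⟩ := p
  rw [skewMul_apply]
  rw [Finset.sum_eq_single_of_mem a (Finset.mem_univ a) ?side1]
  · rw [Finset.sum_eq_single_of_mem (𝟙 a) (Finset.mem_univ (𝟙 a)) ?side2]
    · have h1 : skewOne (fun a b g => S.e g) ⟨a, a, 𝟙 a⟩ = S.e (𝟙 a) := by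
        show (if hp : a = a then (if 𝟙 a = eqToHom hp then S.e (𝟙 a) else 0) else 0) = _
        rw [dif_pos rfl, if_pos (by simp)]
      have hFe : S.F k (S.e (𝟙 a)) = S.e k := by
        have hmem : S.e (Groupoid.inv k) ∈ S.act.D (𝟙 a) := S.mem_D_id _ (S.e_mem _)
        rw [F, S.e_central (𝟙 a), S.mul_e_of_mem _ hmem, S.f_e_inv]
      rw [h1, show Groupoid.inv (𝟙 a) ≫ k = k by simp, hFe,
        S.mul_e_of_mem _ (hu ⟨a, b, k⟩)]
    · intro h _ hne
      have h0 : skewOne (fun a b g => S.e g) ⟨a, a, h⟩ = 0 := by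
        show (if hp : a = a then (if h = eqToHom hp then S.e (𝟙 a) else 0) else 0) = 0
        rw [dif_pos rfl, if_neg (by simpa using hne)]
      rw [h0, S.F_zero, mul_zero]
  · intro c _ hc
    apply Finset.sum_eq_zero
    intro h _
    have h0 : skewOne (fun a b g => S.e g) ⟨a, c, h⟩ = 0 := by
      show (if hp : a = c then _ else (0 : A)) = 0
      rw [dif_neg fun hac => hc hac.symm]
    rw [h0, S.F_zero, mul_zero]

end UnitalPGA
namespace UnitalPGA

variable {G : Type u} {A : Type v} [Groupoid G] [Ring A] [Fintype G]
    [∀ a b : G, Fintype (a ⟶ b)] (S : UnitalPGA G A)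

/-- Precomposition with `h` as an equivalence of hom-sets. -/
def compEquiv {a c : G} (h : a ⟶ c) (d : G) : (c ⟶ d) ≃ (a ⟶ d) :=
  ⟨fun m => h ≫ m, fun m => Groupoid.inv h ≫ m, fun m => by simp, fun m => by simp⟩

lemma sum_swap4 {M : Type v} [AddCommMonoid M] {a : G}
    (f : ∀ (c : G), (a ⟶ c) → ∀ (d : G), (a ⟶ d) → M) :
    ∑ d : G, ∑ m : a ⟶ d, ∑ c : G, ∑ h : a ⟶ c, f c h d m
      = ∑ c : G, ∑ h : a ⟶ c, ∑ d : G, ∑ m : a ⟶ d, f c h d m := by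
  have A1 : ∀ (t : ∀ d : G, (a ⟶ d) → M),
      ∑ d : G, ∑ m : a ⟶ d, t d m = ∑ x : Σ d : G, (a ⟶ d), t x.1 x.2 := by
    intro t; rw [← Finset.univ_sigma_univ, Finset.sum_sigma]
  simp only [A1]
  exact Finset.sum_comm

lemma skewMul_assoc (u v w : Mor G → A) (hv : v ∈ skewSupp S.act) :
    skewMul S.act (fun a b g => S.e g) (skewMul S.act (fun a b g => S.e g) u v) w =
      skewMul S.act (fun a b g => S.e g) u (skewMul S.act (fun a b g => S.e g) v w) := by
  funext p; obtain ⟨a, b, k⟩ := p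
  rw [skewMul_apply, skewMul_apply]
  simp only [skewMul_apply, Finset.sum_mul, S.F_sum, Finset.mul_sum]
  rw [sum_swap4 (f := fun c h d m =>
    u ⟨d, b, Groupoid.inv m ≫ k⟩ *
      S.F (Groupoid.inv m ≫ k) (v ⟨c, ⟨d, Groupoid.inv h ≫ m⟩⟩ *
        S.F (Groupoid.inv h ≫ m) (w ⟨a, c, h⟩)))]
  refine Finset.sum_congr rfl fun c _ => Finset.sum_congr rfl fun h _ => ?_
  refine Finset.sum_congr rfl fun d _ => ?_
  rw [← Fintype.sum_equiv (compEquiv h d)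
    (fun m => u ⟨d, b, Groupoid.inv (h ≫ m) ≫ k⟩ *
      S.F (Groupoid.inv (h ≫ m) ≫ k) (v ⟨c, ⟨d, Groupoid.inv h ≫ h ≫ m⟩⟩ *
        S.F (Groupoid.inv h ≫ h ≫ m) (w ⟨a, c, h⟩)))
    (fun m => u ⟨d, b, Groupoid.inv m ≫ k⟩ *
      S.F (Groupoid.inv m ≫ k) (v ⟨c, ⟨d, Groupoid.inv h ≫ m⟩⟩ *
        S.F (Groupoid.inv h ≫ m) (w ⟨a, c, h⟩)))
    (fun m => rfl)]
  refine Finset.sum_congr rfl fun m _ => ?_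
  rw [show Groupoid.inv (h ≫ m) ≫ k = Groupoid.inv m ≫ Groupoid.inv h ≫ k by simp,
    show Groupoid.inv h ≫ h ≫ m = m by simp]
  rw [S.F_mul_F m (Groupoid.inv m ≫ Groupoid.inv h ≫ k) _ _ (hv ⟨c, d, m⟩),
    show m ≫ Groupoid.inv m ≫ Groupoid.inv h ≫ k = Groupoid.inv h ≫ k by simp, mul_assoc]

end UnitalPGA

/-- The partial skew groupoid ring `A ⋆_β G = ⊕_{g ∈ G} B_g δ_g` of a unital partial
action of a finite groupoid is an associative unital ring: the convolution
multiplication preserves the carrier, is associative and distributive on it, and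
`∑_{y ∈ G₀} e_y δ_y` is a two-sided identity. -/
theorem stmt16 {G : Type u} {A : Type v} [Groupoid G] [Ring A] [Fintype G]
    [∀ a b : G, Fintype (a ⟶ b)] [DecidableEq G] [∀ a b : G, DecidableEq (a ⟶ b)]
    (S : UnitalPGA G A) :
    (∀ u v : Mor G → A, u ∈ skewSupp S.act → v ∈ skewSupp S.act →
        skewMul S.act (fun a b g => S.e g) u v ∈ skewSupp S.act) ∧
    skewOne (fun a b g => S.e g) ∈ skewSupp S.act ∧
    (∀ u v w : Mor G → A, u ∈ skewSupp S.act → v ∈ skewSupp S.act → w ∈ skewSupp S.act →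
        skewMul S.act (fun a b g => S.e g) (skewMul S.act (fun a b g => S.e g) u v) w =
          skewMul S.act (fun a b g => S.e g) u (skewMul S.act (fun a b g => S.e g) v w)) ∧
    (∀ u v w : Mor G → A, u ∈ skewSupp S.act → v ∈ skewSupp S.act → w ∈ skewSupp S.act →
        skewMul S.act (fun a b g => S.e g) u (v + w) =
          skewMul S.act (fun a b g => S.e g) u v + skewMul S.act (fun a b g => S.e g) u w ∧
        skewMul S.act (fun a b g => S.e g) (u + v) w =
          skewMul S.act (fun a b g => S.e g) u w + skewMul S.act (fun a b g => S.e g) v w) ∧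
    (∀ u ∈ skewSupp S.act,
        skewMul S.act (fun a b g => S.e g) (skewOne (fun a b g => S.e g)) u = u ∧
        skewMul S.act (fun a b g => S.e g) u (skewOne (fun a b g => S.e g)) = u) := by
  refine ⟨S.skewMul_mem, S.skewOne_mem, fun u v w _ hv _ => S.skewMul_assoc u v w hv,
    fun u v w _ _ _ => ⟨S.skewMul_add_right u v w, S.skewMul_add_left u v w⟩,
    fun u hu => ⟨S.skewOne_mul u hu, S.mul_skewOne u hu⟩⟩
end

section
/- Let β be a lifted, τ(x)-global, γ-unital partial action of a finite connected groupoid G on a ring A = ⊕_{y∈G₀}B_y with B_g = A·1_g. Then the ring extension A ⊆ A ⋆_β G is Frobenius: the element u = Σ_{g∈G} 1_g δ_g ⊗ 1_{g⁻¹} δ_{g⁻¹} in (A ⋆_β G) ⊗_A (A ⋆_β G) is central for the (A ⋆_β G)-bimodule structure, and the A-bimodule map ε : A ⋆_β G → A defined by ε(a_g δ_g) = a_g if g is an identity morphism and 0 otherwise satisfies Σ_{g∈G} ε(1_g δ_g)·1_{g⁻¹}δ_{g⁻¹} = 1. -/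
open CategoryTheory

universe u v w

/-- The element `e p δ_p` of the partial skew groupoid ring, supported at the single
morphism `p` with value the idempotent `e p`. -/
def eDelta {G : Type u} {A : Type v} [Groupoid G] [Ring A] [DecidableEq G]
    [∀ a b : G, DecidableEq (a ⟶ b)] (e : ∀ a b : G, (a ⟶ b) → A) (p : Mor G) :
    Mor G → A :=
  fun q => if q = p then e p.1 p.2.1 p.2.2 else 0

/-- The left `A`-action `a · (a_g δ_g) = (a a_g) δ_g` on the skew groupoid ring. -/
def lmulA {G : Type u} {A : Type v} [Groupoid G] [Ring A] (a : A) (u : Mor G → A) :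
    Mor G → A :=
  fun p => a * u p

/-- The right `A`-action `(a_g δ_g) · a = a_g β_g (a · e (inv g)) δ_g`. -/
def rmulA {G : Type u} {A : Type v} [Groupoid G] [Ring A]
    (act : PartialGroupoidAction G A) (e : ∀ a b : G, (a ⟶ b) → A)
    (u : Mor G → A) (a : A) : Mor G → A :=
  fun p => u p * act.f p.2.2 (a * e p.2.1 p.1 (Groupoid.inv p.2.2))

/-- The map `ε : A ⋆_β G → A`, `a_g δ_g ↦ a_g` if `g` is an identity and `0` otherwise. -/
def epsMap {G : Type u} {A : Type v} [Groupoid G] [Ring A] [Fintype G]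
    (u : Mor G → A) : A :=
  ∑ y : G, u ⟨y, y, 𝟙 y⟩

namespace Frob
set_option linter.unusedSectionVars false
open CategoryTheory

variable {G : Type u} {A : Type v} [Groupoid G] [Ring A] [Fintype G]
    [∀ a b : G, Fintype (a ⟶ b)] [DecidableEq G] [∀ a b : G, DecidableEq (a ⟶ b)]
    {x : G} {τ : ∀ y : G, x ⟶ y} (S : LiftedSetting G A x τ)

lemma ginv_inv {a b : G} (g : a ⟶ b) : Groupoid.inv (Groupoid.inv g) = g := by simp

lemma ginv_comp {a b c : G} (g : a ⟶ b) (k : b ⟶ c) :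
    Groupoid.inv (g ≫ k) = Groupoid.inv k ≫ Groupoid.inv g := by
  simp [Groupoid.inv_eq_inv]

lemma ginv_id (y : G) : Groupoid.inv (𝟙 y) = 𝟙 y := by simp [Groupoid.inv_eq_inv]

lemma mem_D_iff {a b : G} (g : a ⟶ b) (u : A) : u ∈ S.act.D g ↔ u * S.e g = u := by
  rw [S.D_eq]; rfl

lemma mul_e_mem {a b : G} (g : a ⟶ b) (u : A) : u * S.e g ∈ S.act.D g := by
  rw [mem_D_iff, mul_assoc, S.e_idem]

lemma e_mem {a b : G} (g : a ⟶ b) : S.e g ∈ S.act.D g := by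
  rw [mem_D_iff, S.e_idem]

lemma absorb {a b a' b' : G} (g : a ⟶ b) (k : a' ⟶ b') :
    (S.e g * S.e k) * S.e g = S.e g * S.e k := by
  rw [mul_assoc, ← S.e_central g (S.e k), ← mul_assoc, S.e_idem]

lemma f_zero {a b : G} (g : a ⟶ b) : S.act.f g 0 = 0 := by
  have h0 : (0 : A) ∈ S.act.D (Groupoid.inv g) := by rw [mem_D_iff, zero_mul]
  have h := S.act.map_add g 0 h0 0 h0
  rw [add_zero] at h
  exact (left_eq_add.mp h)

lemma f_mem {a b : G} (g : a ⟶ b) {u : A} (hu : u ∈ S.act.D (Groupoid.inv g)) :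
    S.act.f g u ∈ S.act.D g := (S.act.bij g).mapsTo hu

lemma f_inv_f {a b : G} (g : a ⟶ b) {u : A} (hu : u ∈ S.act.D (Groupoid.inv g)) :
    S.act.f (Groupoid.inv g) (S.act.f g u) = u := by
  have hmem : S.act.f g u ∈ S.act.D (Groupoid.inv (Groupoid.inv g)) := by
    rw [ginv_inv]; exact f_mem S g hu
  obtain ⟨h1, h2⟩ := S.act.comp g (Groupoid.inv g) u hu hmem
  have hid : u ∈ S.act.D (𝟙 a) := (S.act.ideal_mor (Groupoid.inv g)).1 hu
  rw [← h2]
  have hgi : g ≫ Groupoid.inv g = 𝟙 a := by simp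
  rw [hgi]
  exact S.act.id_act a u hid

lemma f_f_inv {a b : G} (g : a ⟶ b) {u : A} (hu : u ∈ S.act.D g) :
    S.act.f g (S.act.f (Groupoid.inv g) u) = u := by
  have h := f_inv_f S (Groupoid.inv g) (u := u) (by rw [ginv_inv]; exact hu)
  rwa [ginv_inv] at h

end Frob
namespace Frob
set_option linter.unusedSectionVars false
open CategoryTheory

variable {G : Type u} {A : Type v} [Groupoid G] [Ring A] [Fintype G]
    [∀ a b : G, Fintype (a ⟶ b)] [DecidableEq G] [∀ a b : G, DecidableEq (a ⟶ b)]
    {x : G} {τ : ∀ y : G, x ⟶ y} (S : LiftedSetting G A x τ)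

lemma keyE {a b c : G} (g : a ⟶ b) (k : b ⟶ c) :
    S.act.f k (S.e g * S.e (Groupoid.inv k)) = S.e (g ≫ k) * S.e k := by
  have m0 : S.e g * S.e (Groupoid.inv k) ∈ S.act.D (Groupoid.inv k) := by
    rw [mem_D_iff, mul_assoc, S.e_idem]
  set r : a ⟶ c := g ≫ k with hr
  set w := S.act.f k (S.e g * S.e (Groupoid.inv k)) with hw
  have hwk : w ∈ S.act.D k := f_mem S k m0
  -- step 2 : w ∈ D r
  have hinv : S.act.f (Groupoid.inv k) w ∈ S.act.D (Groupoid.inv (Groupoid.inv g)) := by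
    rw [ginv_inv, hw, f_inv_f S k m0, mem_D_iff]
    exact absorb S g (Groupoid.inv k)
  obtain ⟨hwr', _⟩ := S.act.comp (Groupoid.inv k) (Groupoid.inv g) w
    (by rw [ginv_inv]; exact hwk) hinv
  have hwr : w ∈ S.act.D r := by
    rw [show Groupoid.inv (Groupoid.inv k ≫ Groupoid.inv g) = r by
      simp [hr, Groupoid.inv_eq_inv]] at hwr'
    exact hwr'
  -- steps 3-4 : z := f (inv k) (e r * e k) lies in D g and D (inv k)
  have mrk : S.e r * S.e k ∈ S.act.D r := by rw [mem_D_iff]; exact absorb S r k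
  have memk : S.e r * S.e k ∈ S.act.D k := by
    rw [mem_D_iff, mul_assoc, S.e_idem]
  set z := S.act.f (Groupoid.inv k) (S.e r * S.e k) with hz
  have hzk : z ∈ S.act.D (Groupoid.inv k) :=
    f_mem S (Groupoid.inv k) (by rw [ginv_inv]; exact memk)
  have hu0 : S.act.f (Groupoid.inv r) (S.e r * S.e k) ∈ S.act.D (Groupoid.inv r) :=
    f_mem S (Groupoid.inv r) (by rw [ginv_inv]; exact mrk)
  have hfr : S.act.f r (S.act.f (Groupoid.inv r) (S.e r * S.e k)) = S.e r * S.e k :=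
    f_f_inv S r mrk
  have hrk : r ≫ Groupoid.inv k = g := by simp [hr]
  obtain ⟨hu1, hu2⟩ := S.act.comp r (Groupoid.inv k) _ hu0
    (by rw [ginv_inv, hfr]; exact memk)
  rw [hrk] at hu1 hu2
  have hzg : z ∈ S.act.D g := by
    rw [hz, ← hfr, ← hu2]; exact f_mem S g hu1
  -- step 5
  have hz_absorb : z * (S.e g * S.e (Groupoid.inv k)) = z := by
    rw [← mul_assoc, (mem_D_iff S g z).mp hzg, (mem_D_iff S (Groupoid.inv k) z).mp hzk]
  have hfkz : S.act.f k z = S.e r * S.e k := by rw [hz]; exact f_f_inv S k memk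
  have step5 : (S.e r * S.e k) * w = S.e r * S.e k := by
    have h := S.act.map_mul k z hzk _ m0
    rw [hz_absorb, hfkz, ← hw] at h
    exact h.symm
  -- step 6
  have step6 : w * (S.e r * S.e k) = w := by
    rw [← mul_assoc, (mem_D_iff S r w).mp hwr, (mem_D_iff S k w).mp hwk]
  -- step 7
  have comm : w * (S.e r * S.e k) = (S.e r * S.e k) * w := by
    rw [← mul_assoc, ← S.e_central r w, mul_assoc, ← S.e_central k w, ← mul_assoc]
  calc w = w * (S.e r * S.e k) := step6.symm
    _ = (S.e r * S.e k) * w := comm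
    _ = S.e r * S.e k := step5

lemma f_mem_comp {a b c : G} (q : b ⟶ c) (p : a ⟶ b) {u : A}
    (hu1 : u ∈ S.act.D (Groupoid.inv q)) (hu2 : u ∈ S.act.D p) :
    S.act.f q u ∈ S.act.D (p ≫ q) := by
  have habs : u * (S.e p * S.e (Groupoid.inv q)) = u := by
    rw [← mul_assoc, (mem_D_iff S p u).mp hu2, (mem_D_iff S (Groupoid.inv q) u).mp hu1]
  have m0 : S.e p * S.e (Groupoid.inv q) ∈ S.act.D (Groupoid.inv q) := by
    rw [mem_D_iff, mul_assoc, S.e_idem]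
  have h := S.act.map_mul q u hu1 _ m0
  rw [habs, keyE S p q] at h
  rw [mem_D_iff, h, mul_assoc, absorb S (p ≫ q) q]

end Frob
namespace Frob
set_option linter.unusedSectionVars false
open CategoryTheory

variable {G : Type u} {A : Type v} [Groupoid G] [Ring A] [Fintype G]
    [∀ a b : G, Fintype (a ⟶ b)] [DecidableEq G] [∀ a b : G, DecidableEq (a ⟶ b)]
    {x : G} {τ : ∀ y : G, x ⟶ y} (S : LiftedSetting G A x τ)

/-- Element supported at a single morphism. -/
def sDelta {G : Type u} {A : Type v} [Groupoid G] [Ring A] [DecidableEq G]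
    [∀ a b : G, DecidableEq (a ⟶ b)] (q : Mor G) (a : A) : Mor G → A :=
  fun r => if r = q then a else 0

lemma eDelta_eq_sDelta (p : Mor G) :
    eDelta (fun a b (g : a ⟶ b) => S.e g) p = sDelta p (S.e p.2.2) := rfl

lemma mor_src {q q' : Mor G} (h : q = q') : q.1 = q'.1 := by rw [h]
lemma mor_tgt {q q' : Mor G} (h : q = q') : q.2.1 = q'.2.1 := by rw [h]
lemma mor_mk_eq_iff {a b : G} {g g' : a ⟶ b} :
    (⟨a, b, g⟩ : Mor G) = ⟨a, b, g'⟩ ↔ g = g' := by simp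

lemma sum_mor {M : Type w₂} [AddCommMonoid M] (F : Mor G → M) :
    ∑ p : Mor G, F p = ∑ a : G, ∑ b : G, ∑ g : a ⟶ b, F ⟨a, b, g⟩ := by
  rw [← Finset.univ_sigma_univ, Finset.sum_sigma]
  refine Finset.sum_congr rfl fun a _ => ?_
  rw [← Finset.univ_sigma_univ, Finset.sum_sigma]

lemma skewMul_sDelta_comp {a₀ b₀ c₀ : G} (g : a₀ ⟶ b₀) (k : b₀ ⟶ c₀) (u v : A) :
    skewMul S.act (fun a b g => S.e g) (sDelta ⟨b₀, c₀, k⟩ u) (sDelta ⟨a₀, b₀, g⟩ v) =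
    sDelta ⟨a₀, c₀, g ≫ k⟩ (u * S.act.f k (v * S.e (Groupoid.inv k))) := by
  funext r
  obtain ⟨r₀, r₁, m⟩ := r
  simp only [skewMul, sDelta]
  by_cases h0 : r₀ = a₀
  · subst h0
    rw [Finset.sum_eq_single b₀ ?side1 (by simp)]
    rw [Finset.sum_eq_single g ?side2 (by simp)]
    · rw [if_pos rfl]
      by_cases hm : (⟨r₀, r₁, m⟩ : Mor G) = ⟨r₀, c₀, g ≫ k⟩
      · have h1 : r₁ = c₀ := mor_tgt hm
        subst h1
        have h2 : m = g ≫ k := mor_mk_eq_iff.mp hm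
        subst h2
        have hcomp : Groupoid.inv g ≫ g ≫ k = k := by simp
        rw [if_pos hm]
        simp only [hcomp]
        simp
      · rw [if_neg hm, if_neg ?c1, zero_mul]
        case c1 =>
          intro hcon
          apply hm
          have h1 : r₁ = c₀ := mor_tgt hcon
          subst h1
          have h2 : Groupoid.inv g ≫ m = k := mor_mk_eq_iff.mp hcon
          have h3 : m = g ≫ k := by rw [← h2, ← Category.assoc]; simp
          subst h3
          rfl
    case side2 =>
      intro h _ hne
      rw [if_neg (fun hcon : (⟨r₀, b₀, h⟩ : Mor G) = ⟨r₀, b₀, g⟩ => hne (mor_mk_eq_iff.mp hcon)),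
        zero_mul, f_zero S, mul_zero]
    case side1 =>
      intro c _ hne
      apply Finset.sum_eq_zero
      intro h _
      rw [if_neg (fun hcon : (⟨r₀, c, h⟩ : Mor G) = ⟨r₀, b₀, g⟩ => hne (mor_tgt hcon)),
        zero_mul, f_zero S, mul_zero]
  · rw [if_neg (fun hcon : (⟨r₀, r₁, m⟩ : Mor G) = ⟨a₀, c₀, g ≫ k⟩ => h0 (mor_src hcon))]
    apply Finset.sum_eq_zero; intro c _
    apply Finset.sum_eq_zero; intro h _
    rw [if_neg (fun hcon : (⟨r₀, c, h⟩ : Mor G) = ⟨a₀, b₀, g⟩ => h0 (mor_src hcon)),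
      zero_mul, f_zero S, mul_zero]

lemma skewMul_sDelta_zero (q p : Mor G) (u v : A) (h : p.2.1 ≠ q.1) :
    skewMul S.act (fun a b g => S.e g) (sDelta q u) (sDelta p v) = 0 := by
  funext r
  obtain ⟨r₀, r₁, m⟩ := r
  obtain ⟨p₀, p₁, pm⟩ := p
  obtain ⟨q₀, q₁, qm⟩ := q
  simp only [skewMul, sDelta, Pi.zero_apply]
  apply Finset.sum_eq_zero; intro c _
  apply Finset.sum_eq_zero; intro hh _
  by_cases hv : (⟨r₀, c, hh⟩ : Mor G) = ⟨p₀, p₁, pm⟩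
  · have hc : c = p₁ := mor_tgt hv
    rw [if_neg ?u0, zero_mul]
    case u0 =>
      intro hcon
      exact h (by rw [show (⟨p₀,p₁,pm⟩ : Mor G).2.1 = p₁ from rfl, ← hc]; exact mor_src hcon)
  · rw [if_neg hv, zero_mul, f_zero S, mul_zero]

end Frob
namespace Frob
set_option linter.unusedSectionVars false
set_option linter.unusedVariables false
open CategoryTheory

variable {G : Type u} {A : Type v} [Groupoid G] [Ring A] [Fintype G]
    [∀ a b : G, Fintype (a ⟶ b)] [DecidableEq G] [∀ a b : G, DecidableEq (a ⟶ b)]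
    {x : G} {τ : ∀ y : G, x ⟶ y} (S : LiftedSetting G A x τ)

lemma skewMul_add_left (u v w : Mor G → A) :
    skewMul S.act (fun a b g => S.e g) (u + v) w =
    skewMul S.act (fun a b g => S.e g) u w + skewMul S.act (fun a b g => S.e g) v w := by
  funext r
  simp only [skewMul, Pi.add_apply, add_mul, Finset.sum_add_distrib]

lemma skewMul_add_right (u v w : Mor G → A) :
    skewMul S.act (fun a b g => S.e g) u (v + w) =
    skewMul S.act (fun a b g => S.e g) u v + skewMul S.act (fun a b g => S.e g) u w := by
  funext r
  simp only [skewMul, Pi.add_apply]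
  rw [← Finset.sum_add_distrib]
  refine Finset.sum_congr rfl fun c _ => ?_
  rw [← Finset.sum_add_distrib]
  refine Finset.sum_congr rfl fun h _ => ?_
  rw [add_mul, S.act.map_add _ _ (mul_e_mem S _ _) _ (mul_e_mem S _ _), mul_add]

lemma skewMul_sum_left {ι : Type*} (t : Finset ι) (us : ι → Mor G → A) (w : Mor G → A) :
    skewMul S.act (fun a b g => S.e g) (∑ i ∈ t, us i) w =
    ∑ i ∈ t, skewMul S.act (fun a b g => S.e g) (us i) w :=
  map_sum (AddMonoidHom.mk' (fun z => skewMul S.act (fun a b g => S.e g) z w)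
    (fun z z' => skewMul_add_left S z z' w)) us t

lemma skewMul_sum_right {ι : Type*} (t : Finset ι) (u : Mor G → A) (vs : ι → Mor G → A) :
    skewMul S.act (fun a b g => S.e g) u (∑ i ∈ t, vs i) =
    ∑ i ∈ t, skewMul S.act (fun a b g => S.e g) u (vs i) :=
  map_sum (AddMonoidHom.mk' (fun z => skewMul S.act (fun a b g => S.e g) u z)
    (fun z z' => skewMul_add_right S u z z')) vs t

lemma sDelta_decomp (s : Mor G → A) : s = ∑ q : Mor G, sDelta q (s q) := by
  funext r
  rw [Finset.sum_apply]
  simp [sDelta]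

/-- `(a ⟶ b) ≃ (a ⟶ c)` by composing with `k`. -/
def compEquiv {a b c : G} (k : b ⟶ c) : (a ⟶ b) ≃ (a ⟶ c) where
  toFun g := g ≫ k
  invFun m := m ≫ Groupoid.inv k
  left_inv g := by simp
  right_inv m := by simp

end Frob
namespace Frob
set_option linter.unusedSectionVars false
set_option linter.unusedVariables false
open CategoryTheory

variable {G : Type u} {A : Type v} [Groupoid G] [Ring A] [Fintype G]
    [∀ a b : G, Fintype (a ⟶ b)] [DecidableEq G] [∀ a b : G, DecidableEq (a ⟶ b)]
    {x : G} {τ : ∀ y : G, x ⟶ y} (S : LiftedSetting G A x τ)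

lemma step_core {T : Type w} [AddCommGroup T] (bil : (Mor G → A) → (Mor G → A) → T)
    (hbal : ∀ (u v : Mor G → A) (a : A),
      bil (rmulA S.act (fun a b g => S.e g) u a) v = bil u (lmulA a v))
    {aq bq a : G} (k : aq ⟶ bq) (g : a ⟶ aq) (sq : A) (hsq : sq ∈ S.act.D k) :
    bil (skewMul S.act (fun a b g => S.e g) (sDelta ⟨aq, bq, k⟩ sq)
          (eDelta (fun a b g => S.e g) ⟨a, aq, g⟩))
        (eDelta (fun a b g => S.e g) ⟨aq, a, Groupoid.inv g⟩) =
    bil (eDelta (fun a b g => S.e g) ⟨a, bq, g ≫ k⟩)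
        (skewMul S.act (fun a b g => S.e g)
          (eDelta (fun a b g => S.e g) ⟨bq, a, Groupoid.inv (g ≫ k)⟩)
          (sDelta ⟨aq, bq, k⟩ sq)) := by
  set R : a ⟶ bq := g ≫ k with hR
  -- the value y = sq * e R and its preimage b0
  have hy : sq * S.e R ∈ S.act.D R := mul_e_mem S R sq
  have hyk : sq * S.e R ∈ S.act.D k := by
    rw [mem_D_iff, mul_assoc, ← S.e_central k, ← mul_assoc, (mem_D_iff S k sq).mp hsq]
  have hb0 : S.act.f (Groupoid.inv R) (sq * S.e R) ∈ S.act.D (Groupoid.inv R) :=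
    f_mem S (Groupoid.inv R) (by rw [ginv_inv]; exact hy)
  have h5 : k ≫ Groupoid.inv R = Groupoid.inv g := by
    rw [hR]; simp [Groupoid.inv_eq_inv]
  have hbg : S.act.f (Groupoid.inv R) (sq * S.e R) ∈ S.act.D (Groupoid.inv g) := by
    rw [← h5]
    exact f_mem_comp S (Groupoid.inv R) k (by rw [ginv_inv]; exact hy) hyk
  -- 1. compute the first factor in the LHS
  have hval : sq * S.act.f k (S.e g * S.e (Groupoid.inv k)) = sq * S.e R := by
    rw [keyE S g k, ← S.e_central k (S.e (g ≫ k)), ← mul_assoc,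
      (mem_D_iff S k sq).mp hsq, hR]
  have hLmul : skewMul S.act (fun a b g => S.e g) (sDelta ⟨aq, bq, k⟩ sq)
      (eDelta (fun a b g => S.e g) ⟨a, aq, g⟩) = sDelta ⟨a, bq, R⟩ (sq * S.e R) := by
    rw [eDelta_eq_sDelta S ⟨a, aq, g⟩]
    rw [skewMul_sDelta_comp S g k sq (S.e g), hval]
  -- 2. sDelta as a right action on eDelta
  have hrm : sDelta ⟨a, bq, R⟩ (sq * S.e R) =
      rmulA S.act (fun a b g => S.e g) (eDelta (fun a b g => S.e g) ⟨a, bq, R⟩)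
        (S.act.f (Groupoid.inv R) (sq * S.e R)) := by
    funext r
    simp only [rmulA, eDelta, sDelta]
    by_cases hr : r = (⟨a, bq, R⟩ : Mor G)
    · subst hr
      rw [if_pos rfl, if_pos rfl, (mem_D_iff S (Groupoid.inv R) _).mp hb0,
        f_f_inv S R hy, S.e_central R _, (mem_D_iff S R _).mp hy]
    · rw [if_neg hr, if_neg hr, zero_mul]
  -- 3. compute the second factor in the RHS
  have hcm : skewMul S.act (fun a b g => S.e g)
      (eDelta (fun a b g => S.e g) ⟨bq, a, Groupoid.inv R⟩) (sDelta ⟨aq, bq, k⟩ sq) =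
      sDelta ⟨aq, a, k ≫ Groupoid.inv R⟩
        (S.e (Groupoid.inv R) * S.act.f (Groupoid.inv R)
          (sq * S.e (Groupoid.inv (Groupoid.inv R)))) := by
    rw [eDelta_eq_sDelta S ⟨bq, a, Groupoid.inv R⟩]
    exact skewMul_sDelta_comp S k (Groupoid.inv R) (S.e (Groupoid.inv R)) sq
  rw [ginv_inv, h5] at hcm
  have hval2 : S.e (Groupoid.inv R) * S.act.f (Groupoid.inv R) (sq * S.e R) =
      S.act.f (Groupoid.inv R) (sq * S.e R) := by
    rw [S.e_central (Groupoid.inv R) _, (mem_D_iff S (Groupoid.inv R) _).mp hb0]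
  rw [hval2] at hcm
  -- 4. compute the lmulA term
  have hlm : lmulA (S.act.f (Groupoid.inv R) (sq * S.e R))
      (eDelta (fun a b g => S.e g) ⟨aq, a, Groupoid.inv g⟩) =
      sDelta ⟨aq, a, Groupoid.inv g⟩ (S.act.f (Groupoid.inv R) (sq * S.e R)) := by
    funext r
    simp only [lmulA, eDelta, sDelta]
    by_cases hr : r = (⟨aq, a, Groupoid.inv g⟩ : Mor G)
    · subst hr
      rw [if_pos rfl, if_pos rfl, (mem_D_iff S (Groupoid.inv g) _).mp hbg]
    · rw [if_neg hr, if_neg hr, mul_zero]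
  rw [hLmul, hrm, hbal, hlm, hcm]

lemma main_term {T : Type w} [AddCommGroup T] (bil : (Mor G → A) → (Mor G → A) → T)
    (h1 : ∀ u v w : Mor G → A, bil (u + v) w = bil u w + bil v w)
    (h2 : ∀ u v w : Mor G → A, bil u (v + w) = bil u v + bil u w)
    (hbal : ∀ (u v : Mor G → A) (a : A),
      bil (rmulA S.act (fun a b g => S.e g) u a) v = bil u (lmulA a v))
    (q : Mor G) (sq : A) (hsq : sq ∈ S.act.D q.2.2) :
    (∑ p : Mor G, bil (skewMul S.act (fun a b g => S.e g) (sDelta q sq)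
        (eDelta (fun a b g => S.e g) p))
        (eDelta (fun a b g => S.e g) ⟨p.2.1, p.1, Groupoid.inv p.2.2⟩)) =
    ∑ p : Mor G, bil (eDelta (fun a b g => S.e g) p)
        (skewMul S.act (fun a b g => S.e g)
          (eDelta (fun a b g => S.e g) ⟨p.2.1, p.1, Groupoid.inv p.2.2⟩) (sDelta q sq)) := by
  obtain ⟨aq, bq, k⟩ := q
  have bil0_left : ∀ w, bil 0 w = 0 := fun w => by
    have h := h1 0 0 w; rw [add_zero] at h; exact left_eq_add.mp h
  have bil0_right : ∀ w, bil w 0 = 0 := fun w => by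
    have h := h2 w 0 0; rw [add_zero] at h; exact left_eq_add.mp h
  rw [sum_mor, sum_mor]
  refine Finset.sum_congr rfl fun a _ => ?_
  rw [Finset.sum_eq_single aq ?z1 (by simp)]
  rw [Finset.sum_eq_single bq ?z2 (by simp)]
  case z1 =>
    intro b _ hne
    apply Finset.sum_eq_zero
    intro g _
    rw [eDelta_eq_sDelta S ⟨a, b, g⟩,
      skewMul_sDelta_zero S ⟨aq, bq, k⟩ ⟨a, b, g⟩ sq (S.e g) hne, bil0_left]
  case z2 =>
    intro b _ hne
    apply Finset.sum_eq_zero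
    intro m _
    rw [eDelta_eq_sDelta S ⟨b, a, Groupoid.inv m⟩,
      skewMul_sDelta_zero S ⟨b, a, Groupoid.inv m⟩ ⟨aq, bq, k⟩ (S.e (Groupoid.inv m)) sq
        (Ne.symm hne), bil0_right]
  · rw [← Equiv.sum_comp (compEquiv (a := a) k)
      (fun m => bil (eDelta (fun a b g => S.e g) ⟨a, bq, m⟩)
        (skewMul S.act (fun a b g => S.e g)
          (eDelta (fun a b g => S.e g) ⟨bq, a, Groupoid.inv m⟩) (sDelta ⟨aq, bq, k⟩ sq)))]
    refine Finset.sum_congr rfl fun g _ => ?_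
    exact step_core S bil hbal k g sq hsq

end Frob
/-- The extension `A ⊆ A ⋆_β G` is Frobenius: the element
`u = ∑_g e_g δ_g ⊗ e_{g⁻¹} δ_{g⁻¹}` of `(A ⋆_β G) ⊗_A (A ⋆_β G)` is central (expressed
via all `A`-balanced biadditive maps, by the universal property of the balanced tensor
product), `ε` is an `A`-bimodule map, and `∑_g ε(e_g δ_g) · e_{g⁻¹} δ_{g⁻¹} = 1`. -/
theorem stmt18 {G : Type u} {A : Type v} [Groupoid G] [Ring A] [Fintype G]
    [∀ a b : G, Fintype (a ⟶ b)] [DecidableEq G] [∀ a b : G, DecidableEq (a ⟶ b)]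
    (x : G) (τ : ∀ y : G, x ⟶ y) (S : LiftedSetting G A x τ) :
    (∀ (T : Type w) [AddCommGroup T] (bil : (Mor G → A) → (Mor G → A) → T),
      (∀ u v w : Mor G → A, bil (u + v) w = bil u w + bil v w) →
      (∀ u v w : Mor G → A, bil u (v + w) = bil u v + bil u w) →
      (∀ (u v : Mor G → A) (a : A),
        bil (rmulA S.act (fun a b g => S.e g) u a) v = bil u (lmulA a v)) →
      ∀ s ∈ skewSupp S.act,
        (∑ p : Mor G,
          bil (skewMul S.act (fun a b g => S.e g) s (eDelta (fun a b g => S.e g) p))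
            (eDelta (fun a b g => S.e g) ⟨p.2.1, p.1, Groupoid.inv p.2.2⟩)) =
        ∑ p : Mor G,
          bil (eDelta (fun a b g => S.e g) p)
            (skewMul S.act (fun a b g => S.e g)
              (eDelta (fun a b g => S.e g) ⟨p.2.1, p.1, Groupoid.inv p.2.2⟩) s)) ∧
    (∀ u v : Mor G → A, epsMap (u + v) = epsMap u + epsMap v) ∧
    (∀ (a : A) (u : Mor G → A), u ∈ skewSupp S.act →
        epsMap (lmulA a u) = a * epsMap u ∧
        epsMap (rmulA S.act (fun a b g => S.e g) u a) = epsMap u * a) ∧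
    (∑ p : Mor G, lmulA (epsMap (eDelta (fun a b g => S.e g) p))
        (eDelta (fun a b g => S.e g) ⟨p.2.1, p.1, Groupoid.inv p.2.2⟩)) =
      skewOne (fun a b g => S.e g) := by
  open Frob in
  refine ⟨?_, ?_, ?_, ?_⟩
  · -- centrality of u
    intro T _ bil h1 h2 hbal s hs
    have bsl : ∀ (f : Mor G → Mor G → A) (w : Mor G → A),
        bil (∑ i : Mor G, f i) w = ∑ i : Mor G, bil (f i) w := fun f w =>
      map_sum (AddMonoidHom.mk' (fun z => bil z w) (fun z z' => h1 z z' w)) f Finset.univ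
    have bsr : ∀ (w : Mor G → A) (f : Mor G → Mor G → A),
        bil w (∑ i : Mor G, f i) = ∑ i : Mor G, bil w (f i) := fun w f =>
      map_sum (AddMonoidHom.mk' (fun z => bil w z) (fun z z' => h2 w z z')) f Finset.univ
    calc
      (∑ p : Mor G,
          bil (skewMul S.act (fun a b g => S.e g) s (eDelta (fun a b g => S.e g) p))
            (eDelta (fun a b g => S.e g) ⟨p.2.1, p.1, Groupoid.inv p.2.2⟩))
        = ∑ p : Mor G, ∑ q : Mor G,
            bil (skewMul S.act (fun a b g => S.e g) (sDelta q (s q))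
              (eDelta (fun a b g => S.e g) p))
              (eDelta (fun a b g => S.e g) ⟨p.2.1, p.1, Groupoid.inv p.2.2⟩) := by
            refine Finset.sum_congr rfl fun p _ => ?_
            rw [← bsl, ← skewMul_sum_left S, ← sDelta_decomp]
      _ = ∑ q : Mor G, ∑ p : Mor G,
            bil (skewMul S.act (fun a b g => S.e g) (sDelta q (s q))
              (eDelta (fun a b g => S.e g) p))
              (eDelta (fun a b g => S.e g) ⟨p.2.1, p.1, Groupoid.inv p.2.2⟩) :=
          Finset.sum_comm
      _ = ∑ q : Mor G, ∑ p : Mor G,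
            bil (eDelta (fun a b g => S.e g) p)
              (skewMul S.act (fun a b g => S.e g)
                (eDelta (fun a b g => S.e g) ⟨p.2.1, p.1, Groupoid.inv p.2.2⟩)
                (sDelta q (s q))) :=
          Finset.sum_congr rfl fun q _ => main_term S bil h1 h2 hbal q (s q) (hs q)
      _ = ∑ p : Mor G, ∑ q : Mor G,
            bil (eDelta (fun a b g => S.e g) p)
              (skewMul S.act (fun a b g => S.e g)
                (eDelta (fun a b g => S.e g) ⟨p.2.1, p.1, Groupoid.inv p.2.2⟩)
                (sDelta q (s q))) :=
          Finset.sum_comm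
      _ = ∑ p : Mor G,
            bil (eDelta (fun a b g => S.e g) p)
              (skewMul S.act (fun a b g => S.e g)
                (eDelta (fun a b g => S.e g) ⟨p.2.1, p.1, Groupoid.inv p.2.2⟩) s) := by
            refine Finset.sum_congr rfl fun p _ => ?_
            rw [← bsr, ← skewMul_sum_right S, ← sDelta_decomp]
  · -- additivity of epsMap
    intro u v
    simp [epsMap, Finset.sum_add_distrib]
  · -- epsMap is an A-bimodule map
    intro a u hu
    constructor
    · simp [epsMap, lmulA, Finset.mul_sum]
    · simp only [epsMap, rmulA]
      rw [Finset.sum_mul]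
      refine Finset.sum_congr rfl fun y _ => ?_
      rw [ginv_id, S.act.id_act y _ (mul_e_mem S (𝟙 y) a), ← S.e_central (𝟙 y) a,
        ← mul_assoc, (mem_D_iff S (𝟙 y) _).mp (hu ⟨y, y, 𝟙 y⟩)]
  · -- ∑ ε(e_g δ_g) e_{g⁻¹} δ_{g⁻¹} = 1
    have heps : ∀ y : G, epsMap (eDelta (fun a b (g : a ⟶ b) => S.e g) ⟨y, y, 𝟙 y⟩) =
        S.e (𝟙 y) := by
      intro y
      simp only [epsMap, eDelta]
      rw [Finset.sum_eq_single y ?_ (by simp)]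
      · rw [if_pos rfl]
      · intro z _ hne
        rw [if_neg (fun hcon : (⟨z, z, 𝟙 z⟩ : Mor G) = ⟨y, y, 𝟙 y⟩ => hne (mor_src hcon))]
    have heps0 : ∀ (a b : G) (g : a ⟶ b), (⟨a, b, g⟩ : Mor G) ≠ ⟨a, a, 𝟙 a⟩ →
        epsMap (eDelta (fun a b (g : a ⟶ b) => S.e g) ⟨a, b, g⟩) = 0 := by
      intro a b g hne
      simp only [epsMap, eDelta]
      apply Finset.sum_eq_zero
      intro z _
      rw [if_neg ?_]
      intro hcon
      have h1 : z = a := mor_src hcon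
      subst h1
      exact hne hcon.symm
    funext r
    obtain ⟨r₀, r₁, m⟩ := r
    rw [Finset.sum_apply, sum_mor]
    have hF : ∀ a : G,
        (∑ b : G, ∑ g : a ⟶ b,
          lmulA (epsMap (eDelta (fun a b (g : a ⟶ b) => S.e g) ⟨a, b, g⟩))
            (eDelta (fun a b (g : a ⟶ b) => S.e g) ⟨b, a, Groupoid.inv g⟩) ⟨r₀, r₁, m⟩) =
        S.e (𝟙 a) * (if (⟨r₀, r₁, m⟩ : Mor G) = ⟨a, a, 𝟙 a⟩ then S.e (𝟙 a) else 0) := by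
      intro a
      rw [Finset.sum_eq_single a ?_ (by simp)]
      · rw [Finset.sum_eq_single (𝟙 a) ?_ (by simp)]
        · simp only [lmulA, eDelta, sDelta, heps, ginv_id]
        · intro g _ hne
          rw [heps0 a a g (fun hcon => hne (mor_mk_eq_iff.mp hcon))]
          simp [lmulA]
      · intro b _ hne
        apply Finset.sum_eq_zero
        intro g _
        rw [heps0 a b g (fun hcon => hne (mor_tgt hcon))]
        simp [lmulA]
    rw [Finset.sum_congr rfl fun a _ => hF a]
    simp only [skewOne]
    by_cases hc : r₀ = r₁
    · subst hc
      rw [dif_pos rfl]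
      by_cases hm : m = 𝟙 r₀
      · subst hm
        rw [if_pos (by simp), Finset.sum_eq_single r₀ ?_ (by simp)]
        · rw [if_pos rfl, S.e_idem]
        · intro a _ hne
          rw [if_neg (fun hcon : (⟨r₀, r₀, 𝟙 r₀⟩ : Mor G) = ⟨a, a, 𝟙 a⟩ =>
            hne (mor_src hcon).symm), mul_zero]
      · rw [if_neg (by simpa using hm)]
        apply Finset.sum_eq_zero
        intro a _
        rw [if_neg ?_, mul_zero]
        intro hcon
        have h1 : r₀ = a := mor_src hcon
        subst h1
        exact hm (mor_mk_eq_iff.mp hcon)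
    · rw [dif_neg hc]
      apply Finset.sum_eq_zero
      intro a _
      rw [if_neg ?_, mul_zero]
      intro hcon
      have h1 : r₀ = a := mor_src hcon
      have h2 : r₁ = a := mor_tgt hcon
      exact hc (h1.trans h2.symm)
end
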